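/- arXiv:2004.01741 — 11 statements merged into one kernel-verified Lean document; each statement's English description precedes it below -/
import Mathlib

section
/- For every symmetric Boolean function f on n variables, the nearest neighbor complexity satisfies NN(f) ≤ n + 1. -/
open Finset

noncomputable section

noncomputable instance {n : ℕ} : DecidableEq (EuclideanSpace ℝ (Fin n)) :=
  fun _ _ => Classical.propDecidable _

/-- The embedding of a Boolean value into `ℝ`. -/
def boolToR (b : Bool) : ℝ := if b then 1 else 0

/-- The embedding of a Boolean vector into Euclidean space `ℝ^n`. -/
def toPoint {n : ℕ} (a : Fin n → Bool) : EuclideanSpace ℝ (Fin n) :=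
  WithLp.toLp 2 (fun i => boolToR (a i))

/-- `(P, N)` is a nearest neighbor representation of the Boolean function `f`:
`P` and `N` are disjoint finite sets of points of `ℝ^n` such that for every Boolean
vector `a`, if `f a = 1` then some `b ∈ P` is strictly closer to `a` than every `c ∈ N`,
and if `f a = 0` then some `b ∈ N` is strictly closer to `a` than every `c ∈ P`. -/
def IsNNRep {n : ℕ} (f : (Fin n → Bool) → Bool)
    (P N : Finset (EuclideanSpace ℝ (Fin n))) : Prop :=
  Disjoint P N ∧
  ∀ a : Fin n → Bool,
    (f a = true → ∃ b ∈ P, ∀ c ∈ N, dist (toPoint a) b < dist (toPoint a) c) ∧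
    (f a = false → ∃ b ∈ N, ∀ c ∈ P, dist (toPoint a) b < dist (toPoint a) c)

/-- The nearest neighbor complexity of `f`: the minimum size `|P ∪ N|` of a nearest
neighbor representation `(P, N)` of `f`. -/
def NN {n : ℕ} (f : (Fin n → Bool) → Bool) : ℕ :=
  sInf {m | ∃ P N, IsNNRep f P N ∧ (P ∪ N).card = m}

/-- A point of `ℝ^n` is Boolean if all of its coordinates are `0` or `1`. -/
def IsBooleanPoint {n : ℕ} (p : EuclideanSpace ℝ (Fin n)) : Prop :=
  ∀ i, p i = 0 ∨ p i = 1

/-- The Boolean nearest neighbor complexity of `f`: the minimum size `|P ∪ N|` of a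
nearest neighbor representation of `f` all of whose prototypes are Boolean points. -/
def BNN {n : ℕ} (f : (Fin n → Bool) → Bool) : ℕ :=
  sInf {m | ∃ P N, IsNNRep f P N ∧ (∀ p ∈ P ∪ N, IsBooleanPoint p) ∧ (P ∪ N).card = m}

/-- The weight (number of `1` components) of a Boolean vector. -/
def wt {n : ℕ} (x : Fin n → Bool) : ℕ := (Finset.univ.filter fun i => x i = true).card

/-! The `n + 1` prototypes are the points of the diagonal of the cube with all
coordinates `k / n` for `k = 0, …, n`. The squared distance from a Boolean vector `a` of
weight `w` to the diagonal point `(t, …, t)` is `n t² - 2 w t + w`, a quadratic in `t`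
minimised at `t = w / n`; so the prototype nearest to `a` is the one with `k = w`, and
labelling each prototype by the value of `f` on weight `k` gives a representation of `f`. -/

theorem NN_le_card_of_nearest {n : ℕ} {ι : Type*} [DecidableEq ι]
    (f : (Fin n → Bool) → Bool) (s : Finset ι) (q : ι → EuclideanSpace ℝ (Fin n))
    (label : ι → Bool) (hq : Set.InjOn q s)
    (hnear : ∀ a, ∃ i ∈ s, f a = label i ∧
      ∀ j ∈ s, j ≠ i → dist (toPoint a) (q i) < dist (toPoint a) (q j)) :
    NN f ≤ s.card := by
  set P := {i ∈ s | label i = true}.image q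
  set N := {i ∈ s | label i = false}.image q
  have hdisj : Disjoint P N := by
    simp only [P, N, disjoint_left, mem_image, mem_filter, not_exists, not_and]
    rintro _ ⟨i, ⟨hi, hli⟩, rfl⟩ j hj hqji
    obtain rfl := hq hj.1 hi hqji
    simp [hli] at hj
  have hrep : IsNNRep f P N := by
    refine ⟨hdisj, fun a => ?_⟩
    obtain ⟨i, hi, hfi, hclosest⟩ := hnear a
    have hclass : ∀ b, f a = b → ∃ p ∈ {i ∈ s | label i = b}.image q,
        ∀ c ∈ {i ∈ s | label i = !b}.image q, dist (toPoint a) p < dist (toPoint a) c := by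
      rintro b rfl
      refine ⟨q i, mem_image_of_mem q (mem_filter.2 ⟨hi, hfi.symm⟩), ?_⟩
      simp only [mem_image, mem_filter, forall_exists_index, and_imp]
      rintro _ j hj hlj rfl
      exact hclosest j hj (by rintro rfl; simp [hfi] at hlj)
    exact ⟨hclass true, hclass false⟩
  have hcard : (P ∪ N).card ≤ s.card :=
    calc (P ∪ N).card ≤ (s.image q).card :=
          card_le_card (union_subset (image_subset_image (filter_subset _ _))
            (image_subset_image (filter_subset _ _)))
      _ ≤ s.card := card_image_le
  refine (Nat.sInf_le ?_).trans hcard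
  exact ⟨P, N, hrep, rfl⟩

theorem wt_le {n : ℕ} (a : Fin n → Bool) : wt a ≤ n :=
  (card_filter_le _ _).trans (card_fin n).le

theorem wt_decide_lt {n k : ℕ} (hk : k ≤ n) : wt (fun i : Fin n => decide (i.val < k)) = k := by
  simpa [wt, hk] using Fin.card_filter_val_lt (n := n) (m := k)

theorem sum_boolToR {n : ℕ} (a : Fin n → Bool) : ∑ i, boolToR (a i) = wt a := by
  simp [boolToR, wt, sum_boole]

def constPoint (n : ℕ) (t : ℝ) : EuclideanSpace ℝ (Fin n) := WithLp.toLp 2 fun _ => t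

theorem dist_toPoint_constPoint_sq {n : ℕ} (a : Fin n → Bool) (t : ℝ) :
    dist (toPoint a) (constPoint n t) ^ 2 = n * t ^ 2 - 2 * wt a * t + wt a := by
  have hsq : ∀ i, (boolToR (a i) - t) ^ 2 = boolToR (a i) * (1 - 2 * t) + t ^ 2 := by
    intro i; cases a i <;> simp [boolToR]; ring
  simp only [EuclideanSpace.dist_sq_eq, toPoint, constPoint, Real.dist_eq, sq_abs, hsq,
    sum_add_distrib, ← sum_mul, sum_boolToR, sum_const, card_univ, Fintype.card_fin, nsmul_eq_mul]
  ring

theorem injOn_constPoint_div (n : ℕ) :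
    Set.InjOn (fun k : ℕ => constPoint n (k / n)) (range (n + 1)) := by
  rcases Nat.eq_zero_or_pos n with rfl | hn
  · intro j hj k hk _
    simp_all
  · intro j _ k _ hjk
    have hcoord := congrArg (fun p : EuclideanSpace ℝ (Fin n) => p ⟨0, hn⟩) hjk
    simp only [constPoint] at hcoord
    rw [div_left_inj' (Nat.cast_ne_zero.2 hn.ne')] at hcoord
    exact_mod_cast hcoord

theorem dist_toPoint_constPoint_wt_lt {n j : ℕ} (a : Fin n → Bool) (hj : j ≤ n)
    (hne : j ≠ wt a) :
    dist (toPoint a) (constPoint n (wt a / n)) < dist (toPoint a) (constPoint n (j / n)) := by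
  have hn : (0 : ℝ) < n := Nat.cast_pos.2 (by have := wt_le a; omega)
  refine lt_of_pow_lt_pow_left₀ 2 dist_nonneg ?_
  have hgap : dist (toPoint a) (constPoint n (j / n)) ^ 2
      - dist (toPoint a) (constPoint n (wt a / n)) ^ 2 = ((j : ℝ) - wt a) ^ 2 / n := by
    rw [dist_toPoint_constPoint_sq, dist_toPoint_constPoint_sq]
    field_simp
    ring
  have hgap_pos : (0 : ℝ) < ((j : ℝ) - wt a) ^ 2 / n :=
    div_pos (sq_pos_of_ne_zero (sub_ne_zero.2 (Nat.cast_injective.ne hne))) hn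
  linarith

/-- For every symmetric Boolean function `f` on `n` variables, the
nearest neighbor complexity satisfies `NN(f) ≤ n + 1`. -/
theorem NN_symmetric_le (n : ℕ) (f : (Fin n → Bool) → Bool)
    (hsym : ∀ x y : Fin n → Bool, wt x = wt y → f x = f y) :
    NN f ≤ n + 1 := by
  have hf : ∀ a, f a = f fun i : Fin n => decide (i.val < wt a) :=
    fun a => hsym _ _ (wt_decide_lt (wt_le a)).symm
  simpa using NN_le_card_of_nearest f (range (n + 1)) (fun k : ℕ => constPoint n (k / n))
    (fun k => f fun i : Fin n => decide (i.val < k)) (injOn_constPoint_div n)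
    fun a => ⟨wt a, mem_range.2 (Nat.lt_succ_of_le (wt_le a)), hf a,
      fun j hj hne => dist_toPoint_constPoint_wt_lt a (Nat.lt_succ_iff.1 (mem_range.1 hj)) hne⟩
end
end

section
/- The Boolean nearest neighbor complexity of the n-variable parity function x₁ ⊕ x₂ ⊕ … ⊕ xₙ equals 2^n; that is, every Boolean nearest neighbor representation of parity must take every point of {0,1}^n as a prototype. -/
open Finset

noncomputable section

/-- The parity function `x₁ ⊕ x₂ ⊕ ⋯ ⊕ xₙ`. -/
def parity (n : ℕ) (x : Fin n → Bool) : Bool := decide (Odd (wt x))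

/-!
Between Boolean points, squared Euclidean distance is Hamming distance. Suppose a vertex `a` is
not a prototype, and let `b` be a prototype of the class of `a` nearer to `a` than all prototypes
of the other class. Then `b ≠ a`, say `a i ≠ b i`. Flipping coordinate `i` of `a` changes the
parity, brings `a` one step closer to `b` and at most one step closer to any other prototype, so
`b` still beats the other class at the flipped vertex, a contradiction. Taking every vertex as a
prototype, labelled by its value, represents any Boolean function.
-/

section Hamming

variable {ι : Type*} [Fintype ι] [DecidableEq ι] {β : ι → Type*} [∀ i, DecidableEq (β i)]

theorem hammingDist_update_self_le (x : ∀ i, β i) (i : ι) (v : β i) :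
    hammingDist x (Function.update x i v) ≤ 1 := by
  refine (card_le_card fun j hj => ?_).trans (card_singleton i).le
  by_contra hji
  simp_all [Function.update_of_ne (Finset.mem_singleton.not.mp hji)]

theorem hammingDist_update_add_one {x y : ∀ i, β i} {i : ι} (h : x i ≠ y i) :
    hammingDist (Function.update x i (y i)) y + 1 = hammingDist x y := by
  have hfilter : ({j | Function.update x i (y i) j ≠ y j} : Finset ι) =
      ({j | x j ≠ y j} : Finset ι).erase i := by
    ext j
    by_cases hji : j = i
    · subst hji; simp
    · simp [hji]
  rw [hammingDist, hfilter, card_erase_add_one (by simpa using h), hammingDist]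

end Hamming

theorem wt_update_true {n : ℕ} (x : Fin n → Bool) (i : Fin n) :
    wt (Function.update x i true) = wt (Function.update x i false) + 1 := by
  rw [wt, wt,
    ← card_insert_of_notMem (s := {j | Function.update x i false j = true}) (a := i) (by simp)]
  congr 1
  ext j
  by_cases hji : j = i
  · subst hji; simp
  · simp [hji]

theorem parity_update_not {n : ℕ} (x : Fin n → Bool) (i : Fin n) :
    parity n (Function.update x i (!x i)) = !parity n x := by
  have hx : x = Function.update x i (x i) := (Function.update_eq_self i x).symm
  cases hxi : x i <;> rw [hx, hxi] <;>
    simp [parity, wt_update_true, Nat.odd_add_one, - Nat.not_odd_iff_even]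

theorem boolToR_injective : Function.Injective boolToR := by
  intro a b
  cases a <;> cases b <;> simp [boolToR]

theorem toPoint_injective {n : ℕ} : Function.Injective (toPoint (n := n)) := fun _ _ h =>
  funext fun i => boolToR_injective (congrArg (· i) h)

theorem isBooleanPoint_iff_mem_range_toPoint {n : ℕ} {p : EuclideanSpace ℝ (Fin n)} :
    IsBooleanPoint p ↔ p ∈ Set.range toPoint := by
  constructor
  · intro hp
    refine ⟨fun i => decide (p i = 1), PiLp.ext fun i => ?_⟩
    rcases hp i with h | h <;> simp [toPoint, boolToR, h]
  · rintro ⟨a, rfl⟩ i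
    cases a i <;> simp [toPoint, boolToR]

theorem dist_toPoint_toPoint {n : ℕ} (a b : Fin n → Bool) :
    dist (toPoint a) (toPoint b) = √(hammingDist a b) := by
  have hterm : ∀ i, dist (boolToR (a i)) (boolToR (b i)) ^ 2 = if a i ≠ b i then 1 else 0 := by
    intro i
    cases a i <;> cases b i <;> norm_num [boolToR, Real.dist_eq]
  simp only [EuclideanSpace.dist_eq, toPoint, hterm, sum_boole, hammingDist]

theorem dist_toPoint_lt_dist_toPoint_iff {n : ℕ} (a b c : Fin n → Bool) :
    dist (toPoint a) (toPoint b) < dist (toPoint a) (toPoint c) ↔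
      hammingDist a b < hammingDist a c := by
  rw [dist_toPoint_toPoint, dist_toPoint_toPoint, Real.sqrt_lt_sqrt_iff (Nat.cast_nonneg _),
    Nat.cast_lt]

theorem card_image_toPoint (n : ℕ) : (univ.image (toPoint (n := n))).card = 2 ^ n := by
  simp [card_image_of_injective _ toPoint_injective]

theorem isNNRep_image_toPoint {n : ℕ} (f : (Fin n → Bool) → Bool) :
    IsNNRep f (({a | f a = true} : Finset _).image toPoint)
      (({a | f a = false} : Finset _).image toPoint) := by
  refine ⟨(disjoint_image toPoint_injective).mpr (disjoint_filter.mpr fun a _ h => by simp [h]),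
    fun a => ⟨fun ha => ⟨toPoint a, mem_image_of_mem _ (by simpa), ?_⟩,
      fun ha => ⟨toPoint a, mem_image_of_mem _ (by simpa), ?_⟩⟩⟩ <;>
  · simp only [mem_image, mem_filter, mem_univ, true_and, forall_exists_index, and_imp]
    rintro _ b hb rfl
    rw [dist_self, dist_pos]
    rintro h
    simp_all [toPoint_injective h]

theorem exists_boolean_isNNRep_card_eq_two_pow {n : ℕ} (f : (Fin n → Bool) → Bool) :
    ∃ P N, IsNNRep f P N ∧ (∀ p ∈ P ∪ N, IsBooleanPoint p) ∧ (P ∪ N).card = 2 ^ n := by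
  refine ⟨_, _, isNNRep_image_toPoint f, ?_, ?_⟩
  · simp only [← image_union, mem_image]
    rintro _ ⟨a, -, rfl⟩
    exact isBooleanPoint_iff_mem_range_toPoint.mpr ⟨a, rfl⟩
  · rw [← image_union, ← card_image_toPoint]
    congr 2
    ext a
    cases f a <;> simp

theorem BNN_le_two_pow {n : ℕ} (f : (Fin n → Bool) → Bool) : BNN f ≤ 2 ^ n :=
  Nat.sInf_le (exists_boolean_isNNRep_card_eq_two_pow f)

theorem toPoint_mem_of_nearest_of_forall_flip {n : ℕ}
    {S T : Finset (EuclideanSpace ℝ (Fin n))} (hS : ∀ p ∈ S, IsBooleanPoint p)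
    (hT : ∀ p ∈ T, IsBooleanPoint p) {a : Fin n → Bool}
    (hnear : ∃ b ∈ S, ∀ c ∈ T, dist (toPoint a) b < dist (toPoint a) c)
    (hflip : ∀ i, ∃ c ∈ T, ∀ b ∈ S,
      dist (toPoint (Function.update a i (!a i))) c <
        dist (toPoint (Function.update a i (!a i))) b) :
    toPoint a ∈ S := by
  by_contra ha
  obtain ⟨_, hbS, hb⟩ := hnear
  obtain ⟨b, rfl⟩ := isBooleanPoint_iff_mem_range_toPoint.mp (hS _ hbS)
  obtain ⟨i, hi⟩ := Function.ne_iff.mp fun h : a = b => ha (h ▸ hbS)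
  have hflip_eq : (!a i) = b i := by cases h : a i <;> simp_all
  obtain ⟨_, hcT, hc⟩ := hflip i
  obtain ⟨c, rfl⟩ := isBooleanPoint_iff_mem_range_toPoint.mp (hT _ hcT)
  rw [hflip_eq] at hc
  have hbc := (dist_toPoint_lt_dist_toPoint_iff _ _ _).mp (hb _ hcT)
  have hcb := (dist_toPoint_lt_dist_toPoint_iff _ _ _).mp (hc _ hbS)
  have hb_step := hammingDist_update_add_one hi
  have hc_step := hammingDist_triangle a (Function.update a i (b i)) c
  have hflip_dist := hammingDist_update_self_le a i (b i)
  omega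

theorem toPoint_mem_of_isNNRep {n : ℕ} {f : (Fin n → Bool) → Bool}
    (hf : ∀ a i, f (Function.update a i (!a i)) = !f a)
    {P N : Finset (EuclideanSpace ℝ (Fin n))} (hrep : IsNNRep f P N)
    (hbool : ∀ p ∈ P ∪ N, IsBooleanPoint p) (a : Fin n → Bool) : toPoint a ∈ P ∪ N := by
  have hP : ∀ p ∈ P, IsBooleanPoint p := fun p hp => hbool p (mem_union_left _ hp)
  have hN : ∀ p ∈ N, IsBooleanPoint p := fun p hp => hbool p (mem_union_right _ hp)
  cases hfa : f a
  · exact mem_union_right _ <| toPoint_mem_of_nearest_of_forall_flip hN hP ((hrep.2 a).2 hfa)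
      fun i => (hrep.2 _).1 (by rw [hf, hfa]; rfl)
  · exact mem_union_left _ <| toPoint_mem_of_nearest_of_forall_flip hP hN ((hrep.2 a).1 hfa)
      fun i => (hrep.2 _).2 (by rw [hf, hfa]; rfl)

theorem two_pow_le_BNN {n : ℕ} {f : (Fin n → Bool) → Bool}
    (hf : ∀ a i, f (Function.update a i (!a i)) = !f a) : 2 ^ n ≤ BNN f := by
  obtain ⟨P, N, hrep, hbool, hcard⟩ : BNN f ∈ _ :=
    Nat.sInf_mem ⟨_, exists_boolean_isNNRep_card_eq_two_pow f⟩
  have hsub : univ.image toPoint ⊆ P ∪ N := by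
    simpa [subset_iff] using toPoint_mem_of_isNNRep hf hrep hbool
  exact card_image_toPoint n ▸ hcard ▸ card_le_card hsub

/-- The Boolean nearest neighbor complexity of the `n`-variable parity
function equals `2 ^ n`; indeed, every Boolean nearest neighbor representation of
parity must take every point of `{0,1}^n` as a prototype. -/
theorem BNN_parity (n : ℕ) :
    BNN (parity n) = 2 ^ n ∧
    ∀ P N : Finset (EuclideanSpace ℝ (Fin n)),
      IsNNRep (parity n) P N → (∀ p ∈ P ∪ N, IsBooleanPoint p) →
      ∀ a : Fin n → Bool, toPoint a ∈ P ∪ N :=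
  ⟨(BNN_le_two_pow _).antisymm (two_pow_le_BNN parity_update_not),
    fun _ _ hrep hbool => toPoint_mem_of_isNNRep parity_update_not hrep hbool⟩
end
end

section
/- For every non-constant threshold function f on n variables, the nearest neighbor complexity satisfies NN(f) = 2. -/
open Finset

noncomputable section

/-! A threshold function on the finite cube can be given a strict threshold `s`, and its
weight vector `w` is nonzero as soon as the function is not constant. For any `c` on the
hyperplane `⟪c, w⟫ = s` the two prototypes `c + w` and `c - w` are mirror images in that
hyperplane, so a point is nearer to the one on its own side. Conversely a representation of
a non-constant function needs a prototype of each class. -/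

open scoped InnerProductSpace Topology

section InnerProductSpace

variable {E : Type*} [NormedAddCommGroup E] [InnerProductSpace ℝ E]

theorem dist_add_lt_dist_sub_iff (a c w : E) :
    dist a (c + w) < dist a (c - w) ↔ ⟪c, w⟫_ℝ < ⟪a, w⟫_ℝ := by
  have h₁ : a - (c + w) = (a - c) - w := by abel
  have h₂ : a - (c - w) = (a - c) + w := by abel
  rw [dist_eq_norm, dist_eq_norm, h₁, h₂, ← sq_lt_sq₀ (norm_nonneg _) (norm_nonneg _),
    norm_sub_sq_real, norm_add_sq_real, inner_sub_left]
  constructor <;> intro h <;> linarith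

theorem dist_sub_lt_dist_add_iff (a c w : E) :
    dist a (c - w) < dist a (c + w) ↔ ⟪a, w⟫_ℝ < ⟪c, w⟫_ℝ := by
  simpa [← sub_eq_add_neg] using dist_add_lt_dist_sub_iff a c (-w)

theorem exists_inner_eq {w : E} (hw : w ≠ 0) (t : ℝ) : ∃ c : E, ⟪c, w⟫_ℝ = t :=
  ⟨(t / ‖w‖ ^ 2) • w, by
    rw [real_inner_smul_left, real_inner_self_eq_norm_sq, div_mul_cancel₀ _ (by simpa using hw)]⟩

end InnerProductSpace

theorem exists_strict_threshold {α : Type*} [Finite α] (f : α → Bool) (g : α → ℝ) (t : ℝ)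
    (hf : ∀ x, f x = true ↔ t ≤ g x) :
    ∃ s, ∀ x, (f x = true → s < g x) ∧ (f x = false → g x < s) := by
  have hlt : ∀ᶠ s in 𝓝[<] t, s < t ∧ ∀ x, f x = false → g x < s := by
    refine Filter.inter_mem self_mem_nhdsWithin (Filter.eventually_all.2 fun x => ?_)
    cases hx : f x
    · have : g x < t := not_le.1 fun h => by simpa [hx] using (hf x).2 h
      exact (lt_mem_nhds this).filter_mono nhdsWithin_le_nhds |>.mono fun _ h _ => h
    · exact Filter.Eventually.of_forall fun _ h => Bool.noConfusion h
  obtain ⟨s, hst, hs⟩ := hlt.exists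
  exact ⟨s, fun x => ⟨fun hx => hst.trans_le ((hf x).1 hx), hs x⟩⟩

theorem exists_apply_eq_of_apply_ne {α : Type*} {f : α → Bool} {x y : α} (h : f x ≠ f y)
    (b : Bool) : ∃ a, f a = b := by
  by_contra! hb
  exact h ((Bool.eq_not_of_ne (hb x)).trans (Bool.eq_not_of_ne (hb y)).symm)

theorem inner_toPoint {n : ℕ} (a : Fin n → Bool) (w : Fin n → ℝ) :
    ⟪toPoint a, WithLp.toLp 2 w⟫_ℝ = ∑ i, w i * boolToR (a i) := by
  simp [toPoint, PiLp.inner_apply]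

section NNRep

variable {n : ℕ} {f : (Fin n → Bool) → Bool}

theorem isNNRep_add_sub (c : EuclideanSpace ℝ (Fin n)) {w : EuclideanSpace ℝ (Fin n)} (hw : w ≠ 0)
    (hf : ∀ a, (f a = true → ⟪c, w⟫_ℝ < ⟪toPoint a, w⟫_ℝ) ∧
      (f a = false → ⟪toPoint a, w⟫_ℝ < ⟪c, w⟫_ℝ)) :
    IsNNRep f {c + w} {c - w} := by
  refine ⟨?_, fun a => ⟨fun ha => ?_, fun ha => ?_⟩⟩
  · refine Finset.disjoint_singleton.2 fun h => hw ?_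
    have : (2 : ℝ) • w = 0 := by linear_combination (norm := module) h
    exact (smul_eq_zero.1 this).resolve_left two_ne_zero
  · exact ⟨c + w, Finset.mem_singleton_self _, fun _ hc' => Finset.mem_singleton.1 hc' ▸
      (dist_add_lt_dist_sub_iff _ c w).2 ((hf a).1 ha)⟩
  · exact ⟨c - w, Finset.mem_singleton_self _, fun _ hc' => Finset.mem_singleton.1 hc' ▸
      (dist_sub_lt_dist_add_iff _ c w).2 ((hf a).2 ha)⟩

theorem IsNNRep.two_le_card {P N : Finset (EuclideanSpace ℝ (Fin n))} (h : IsNNRep f P N)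
    {x y : Fin n → Bool} (hxy : f x ≠ f y) : 2 ≤ (P ∪ N).card := by
  obtain ⟨a, ha⟩ := exists_apply_eq_of_apply_ne hxy true
  obtain ⟨b, hb⟩ := exists_apply_eq_of_apply_ne hxy false
  obtain ⟨p, hp, -⟩ := (h.2 a).1 ha
  obtain ⟨q, hq, -⟩ := (h.2 b).2 hb
  rw [Finset.card_union_of_disjoint h.1]
  have := Finset.card_pos.2 ⟨p, hp⟩
  have := Finset.card_pos.2 ⟨q, hq⟩
  omega

theorem NN_eq_two_of_isNNRep {x y : Fin n → Bool} (hxy : f x ≠ f y)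
    {p q : EuclideanSpace ℝ (Fin n)} (h : IsNNRep f {p} {q}) : NN f = 2 := by
  have hcard : ({p} ∪ {q} : Finset _).card = 2 := by
    rw [Finset.card_union_of_disjoint h.1, Finset.card_singleton, Finset.card_singleton]
  refine le_antisymm (Nat.sInf_le ⟨_, _, h, hcard⟩) ?_
  obtain ⟨P, N, hPN, hm⟩ := Nat.sInf_mem (s := {m | ∃ P N, IsNNRep f P N ∧ (P ∪ N).card = m})
    ⟨2, _, _, h, hcard⟩
  exact (hPN.two_le_card hxy).trans_eq hm

end NNRep

/-- For every non-constant threshold function `f` on `n` variables,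
the nearest neighbor complexity satisfies `NN(f) = 2`. -/
theorem NN_threshold (n : ℕ) (f : (Fin n → Bool) → Bool)
    (hth : ∃ (w : Fin n → ℝ) (t : ℝ),
      ∀ x : Fin n → Bool, f x = true ↔ t ≤ ∑ i, w i * boolToR (x i))
    (hnc : ∃ x y : Fin n → Bool, f x ≠ f y) :
    NN f = 2 := by
  obtain ⟨w, t, hw⟩ := hth
  obtain ⟨x, y, hxy⟩ := hnc
  set W : EuclideanSpace ℝ (Fin n) := WithLp.toLp 2 w
  have hf : ∀ a, f a = true ↔ t ≤ ⟪toPoint a, W⟫_ℝ := by simpa only [W, inner_toPoint] using hw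
  have hW : W ≠ 0 := fun hW => hxy <| by
    rw [Bool.eq_iff_iff, hf x, hf y, hW, inner_zero_right, inner_zero_right]
  obtain ⟨s, hs⟩ := exists_strict_threshold f _ t hf
  obtain ⟨c, rfl⟩ := exists_inner_eq hW s
  exact NN_eq_two_of_isNNRep hxy (isNNRep_add_sub c hW hs)
end
end

section
/- Let 1 ≤ t ≤ n and let (P, N) with P, N ⊆ {0,1}^n be a Boolean nearest neighbor representation of the threshold function TH_n^t. If a ∈ {0,1}^n has weight exactly t and p ∈ P is a positive prototype at minimum Hamming distance from a, then a ≤ p in the componentwise partial order. -/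
open Finset

noncomputable section

/-- The threshold function `TH_n^t`, with value `1` iff `x₁ + ⋯ + xₙ ≥ t`. -/
def TH (n t : ℕ) (x : Fin n → Bool) : Bool := decide (t ≤ wt x)

/-!
Suppose `a i = 1` but `p i = 0`, and let `a'` be `a` with coordinate `i` cleared. Then `a'` has
weight `t - 1`, so some negative prototype `c` is strictly closer to `a'` than `p` is. Clearing
coordinate `i` lowers the squared distance to `p` by exactly `1` and to the Boolean point `c` by at
most `1`, so `c` is strictly closer to `a` than `p`. But `a` is positive, so its nearest positive
prototype `p` must beat every negative one.
-/

lemma wt_update_false_add_one {n : ℕ} {a : Fin n → Bool} {i : Fin n} (hai : a i = true) :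
    wt (Function.update a i false) + 1 = wt a := by
  have hfilter : (univ.filter fun j => Function.update a i false j = true)
      = (univ.filter fun j => a j = true).erase i := by
    ext j
    by_cases hj : j = i <;> simp [hj]
  have hmem : i ∈ univ.filter fun j => a j = true := by simp [hai]
  have hpos := card_pos.mpr ⟨i, hmem⟩
  rw [wt, wt, hfilter, card_erase_of_mem hmem]
  omega

lemma dist_toPoint_sq {n : ℕ} (x : Fin n → Bool) (q : EuclideanSpace ℝ (Fin n)) :
    dist (toPoint x) q ^ 2 = ∑ j, (boolToR (x j) - q j) ^ 2 := by
  rw [EuclideanSpace.dist_eq, Real.sq_sqrt (sum_nonneg fun _ _ => sq_nonneg _)]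
  simp only [Real.dist_eq, sq_abs]
  rfl

lemma dist_toPoint_update_false_sq {n : ℕ} {a : Fin n → Bool} {i : Fin n} (hai : a i = true)
    (q : EuclideanSpace ℝ (Fin n)) :
    dist (toPoint (Function.update a i false)) q ^ 2 = dist (toPoint a) q ^ 2 + (2 * q i - 1) := by
  have hterm : ∀ j, (boolToR (Function.update a i false j) - q j) ^ 2
      = (boolToR (a j) - q j) ^ 2 + if j = i then 2 * q i - 1 else 0 := by
    intro j
    by_cases hj : j = i
    · subst hj
      simp only [Function.update_self, hai, boolToR, if_true, if_false, Bool.false_eq_true]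
      ring
    · simp [hj]
  simp only [dist_toPoint_sq, hterm, sum_add_distrib, sum_ite_eq', mem_univ, if_true]

lemma IsNNRep.dist_lt_of_forall_dist_le {n : ℕ} {f : (Fin n → Bool) → Bool}
    {P N : Finset (EuclideanSpace ℝ (Fin n))} (hrep : IsNNRep f P N) {a : Fin n → Bool}
    (ha : f a = true) {p : EuclideanSpace ℝ (Fin n)}
    (hmin : ∀ q ∈ P, dist (toPoint a) p ≤ dist (toPoint a) q) {c : EuclideanSpace ℝ (Fin n)}
    (hc : c ∈ N) : dist (toPoint a) p < dist (toPoint a) c := by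
  obtain ⟨b, hbP, hb⟩ := (hrep.2 a).1 ha
  exact (hmin b hbP).trans_lt (hb c hc)

theorem closest_positive_prototype_covers_general (n t : ℕ)
    (P N : Finset (EuclideanSpace ℝ (Fin n)))
    (hrep : IsNNRep (TH n t) P N) (hbool : ∀ p ∈ P ∪ N, IsBooleanPoint p)
    (a : Fin n → Bool) (ha : wt a = t)
    (p : EuclideanSpace ℝ (Fin n)) (hp : p ∈ P)
    (hmin : ∀ q ∈ P, dist (toPoint a) p ≤ dist (toPoint a) q) :
    ∀ i : Fin n, a i = true → p i = 1 := by
  intro i hai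
  by_contra hpi
  have hpi0 : p i = 0 := (hbool p (mem_union_left _ hp) i).resolve_right hpi
  set a' := Function.update a i false
  have hTHa' : TH n t a' = false := by
    have hwt : wt a' + 1 = t := ha ▸ wt_update_false_add_one hai
    simp only [TH, decide_eq_false_iff_not, not_le]
    omega
  obtain ⟨c, hcN, hc⟩ := (hrep.2 a').2 hTHa'
  have hci : 0 ≤ c i := by rcases hbool c (mem_union_right _ hcN) i with h | h <;> simp [h]
  have hflip : dist (toPoint a') c ^ 2 < dist (toPoint a') p ^ 2 :=
    pow_lt_pow_left₀ (hc p hp) dist_nonneg two_ne_zero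
  have hcloser : dist (toPoint a) p ^ 2 < dist (toPoint a) c ^ 2 :=
    pow_lt_pow_left₀ (hrep.dist_lt_of_forall_dist_le (by simp [TH, ha]) hmin hcN)
      dist_nonneg two_ne_zero
  rw [dist_toPoint_update_false_sq hai, dist_toPoint_update_false_sq hai, hpi0] at hflip
  linarith

/-- Let `1 ≤ t ≤ n` and let `(P, N)` be a Boolean nearest neighbor
representation of `TH_n^t`. If `a` has weight exactly `t` and `p ∈ P` is a positive
prototype at minimum distance from `a`, then `a ≤ p` componentwise. -/
theorem closest_positive_prototype_covers (n t : ℕ) (ht1 : 1 ≤ t) (htn : t ≤ n)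
    (P N : Finset (EuclideanSpace ℝ (Fin n)))
    (hrep : IsNNRep (TH n t) P N) (hbool : ∀ p ∈ P ∪ N, IsBooleanPoint p)
    (a : Fin n → Bool) (ha : wt a = t)
    (p : EuclideanSpace ℝ (Fin n)) (hp : p ∈ P)
    (hmin : ∀ q ∈ P, dist (toPoint a) p ≤ dist (toPoint a) q) :
    ∀ i : Fin n, a i = true → p i = 1 :=
  closest_positive_prototype_covers_general n t P N hrep hbool a ha p hp hmin
end
end

section
/- Let c ∈ {0,1}^n ⊆ ℝ^n, let S_c be the set of all neighbors of c in the hypercube (points at Hamming distance 1 from c), let A ⊆ S_c with |A| = ℓ ≥ 3, and let c_A = (1/|A|)·Σ_{x∈A} x be the centroid of A. Then (a) d(c_A, a) < 1 for every a ∈ A, and (b) d(c_A, a) ≥ 1 for every a ∈ {0,1}^n \ (A ∪ {c}), where d is the Euclidean distance on ℝ^n. -/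
open Finset

noncomputable section

/-! Every neighbour of `c` flips a single coordinate of `c`, so `A` corresponds to a set `I` of
`ℓ` coordinates. Reflecting the cube so that `c` goes to the origin, `A` becomes the unit vectors
`e_j`, `j ∈ I`, with centroid `ℓ⁻¹ ∑_{j ∈ I} e_j`, and a point `a` at Hamming distance `k` from `c`
becomes `∑_{j ∈ D} e_j` with `|D| = k`. Hence `d(c_A, a)² = k + (1 - 2t)/ℓ` with `t = |I ∩ D|`.
For `a ∈ A` this is `1 - 1/ℓ`; for `a ∉ A ∪ {c}` either `k = 1` and `t = 0`, or `k ≥ 2` and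
`t ≤ k`, and then `ℓ ≥ 3` makes it at least `1`. -/

section Flip

variable {ι : Type*} [DecidableEq ι]

def flipAt (c : ι → Bool) (j : ι) : ι → Bool := Function.update c j (!c j)

lemma flipAt_injective (c : ι → Bool) : Function.Injective (flipAt c) := by
  intro i j h
  by_contra hij
  simpa [flipAt, Function.update_apply, hij] using congrFun h i

lemma flipAt_ne_iff {c : ι → Bool} {i j : ι} : flipAt c j i ≠ c i ↔ i = j := by
  by_cases h : i = j <;> simp [flipAt, h]

variable [Fintype ι]

lemma hammingDist_flipAt (c : ι → Bool) (j : ι) : hammingDist (flipAt c j) c = 1 := by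
  simp [hammingDist, flipAt_ne_iff, filter_eq']

lemma eq_flipAt_of_hammingDist_eq_one {a c : ι → Bool} (h : hammingDist a c = 1) :
    ∃ j, a = flipAt c j := by
  obtain ⟨j, hj⟩ := card_eq_one.mp h
  refine ⟨j, funext fun i => ?_⟩
  have hi := Finset.ext_iff.mp hj i
  by_cases hij : i = j
  · subst hij
    simpa [flipAt, Bool.eq_not_iff] using hi
  · simpa [flipAt, hij] using hi

lemma exists_eq_image_flipAt {c : ι → Bool} {A : Finset (ι → Bool)}
    (hA : ∀ a ∈ A, hammingDist a c = 1) : ∃ I : Finset ι, A = I.image (flipAt c) := by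
  refine ⟨univ.filter (flipAt c · ∈ A), ?_⟩
  ext a
  simp only [mem_image, mem_filter, mem_univ, true_and]
  constructor
  · intro ha
    obtain ⟨j, rfl⟩ := eq_flipAt_of_hammingDist_eq_one (hA a ha)
    exact ⟨j, ha, rfl⟩
  · rintro ⟨j, hj, rfl⟩
    exact hj

lemma sum_ite_mem_sub_ite_sq (I : Finset ι) (p : ι → Prop) [DecidablePred p] (w : ℝ) :
    ∑ i, ((if i ∈ I then w else 0) - if p i then 1 else 0) ^ 2 =
      w ^ 2 * #I - 2 * w * #{i ∈ I | p i} + #(univ.filter p) := by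
  have h : ∀ i, ((if i ∈ I then w else 0) - if p i then 1 else 0) ^ 2 =
      (if i ∈ I then w ^ 2 else 0) - (if i ∈ I then 2 * w * if p i then 1 else 0 else 0) +
        if p i then 1 else 0 := by
    intro i
    by_cases hI : i ∈ I <;> by_cases hp : p i <;> simp [hI, hp]; ring
  simp only [h, sum_add_distrib, sum_sub_distrib, sum_ite_mem, univ_inter, sum_const,
    nsmul_eq_mul, sum_boole, ← mul_sum]
  ring

end Flip

lemma boolToR_eq_add (b c : Bool) :
    boolToR b = boolToR c + (1 - 2 * boolToR c) * if b ≠ c then 1 else 0 := by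
  cases b <;> cases c <;> norm_num [boolToR]

@[simp]
lemma toPoint_apply {n : ℕ} (a : Fin n → Bool) (i : Fin n) : toPoint a i = boolToR (a i) := rfl

lemma one_sub_two_mul_boolToR_sq (b : Bool) : (1 - 2 * boolToR b) ^ 2 = 1 := by
  cases b <;> norm_num [boolToR]

lemma toPoint_flipAt_apply {n : ℕ} (c : Fin n → Bool) (j i : Fin n) :
    toPoint (flipAt c j) i =
      boolToR (c i) + (1 - 2 * boolToR (c i)) * if i = j then 1 else 0 := by
  by_cases h : i = j
  · subst h
    cases hc : c i <;> norm_num [flipAt, boolToR, hc]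
  · simp [flipAt, h]

lemma dist_centroid_flipAt_sq {n : ℕ} (c a : Fin n → Bool) {I : Finset (Fin n)}
    (hI : I.Nonempty) :
    dist ((#I : ℝ)⁻¹ • ∑ j ∈ I, toPoint (flipAt c j)) (toPoint a) ^ 2 =
      hammingDist a c + (1 - 2 * #{i ∈ I | a i ≠ c i}) / #I := by
  have hℓ : (#I : ℝ) ≠ 0 := by simpa using hI.ne_empty
  have hcoord : ∀ i, ((#I : ℝ)⁻¹ • ∑ j ∈ I, toPoint (flipAt c j)) i - toPoint a i =
      (1 - 2 * boolToR (c i)) *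
        ((if i ∈ I then (#I : ℝ)⁻¹ else 0) - if a i ≠ c i then 1 else 0) := by
    intro i
    simp only [PiLp.smul_apply, WithLp.ofLp_sum, Finset.sum_apply, smul_eq_mul,
      toPoint_flipAt_apply, sum_add_distrib, sum_const, nsmul_eq_mul, ← mul_sum, sum_ite_eq]
    rw [toPoint_apply, boolToR_eq_add (a i) (c i)]
    split_ifs <;> field_simp <;> ring
  simp only [EuclideanSpace.dist_sq_eq, Real.dist_eq, sq_abs, hcoord, mul_pow,
    one_sub_two_mul_boolToR_sq, one_mul, sum_ite_mem_sub_ite_sq, hammingDist]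
  field_simp
  ring

lemma dist_centroid_flipAt_flipAt_sq {n : ℕ} (c : Fin n → Bool) {I : Finset (Fin n)}
    (hI : I.Nonempty) (j : Fin n) :
    dist ((#I : ℝ)⁻¹ • ∑ i ∈ I, toPoint (flipAt c i)) (toPoint (flipAt c j)) ^ 2 =
      1 + (1 - 2 * if j ∈ I then 1 else 0) / #I := by
  rw [dist_centroid_flipAt_sq c _ hI, hammingDist_flipAt]
  simp only [flipAt_ne_iff, filter_eq']
  split_ifs <;> simp

lemma one_le_add_one_sub_two_mul_div {k t ℓ : ℝ} (hℓ : 3 ≤ ℓ) (hk : 2 ≤ k) (htk : t ≤ k) :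
    1 ≤ k + (1 - 2 * t) / ℓ := by
  rw [← sub_le_iff_le_add', le_div_iff₀ (by linarith)]
  nlinarith

/-- Let `c ∈ {0,1}^n`, let `A` be a set of at least `3` neighbors of
`c` (points at Hamming distance `1` from `c`), and let `c_A` be the centroid of `A`.
Then `d(c_A, a) < 1` for every `a ∈ A`, while `d(c_A, a) ≥ 1` for every point
`a ∈ {0,1}^n \ (A ∪ {c})`. -/
theorem centroid_ball_lemma (n : ℕ) (c : Fin n → Bool) (A : Finset (Fin n → Bool))
    (hA : ∀ a ∈ A, hammingDist a c = 1) (hcard : 3 ≤ A.card) :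
    (∀ a ∈ A, dist ((A.card : ℝ)⁻¹ • ∑ x ∈ A, toPoint x) (toPoint a) < 1) ∧
    (∀ a : Fin n → Bool, a ∉ A → a ≠ c →
      1 ≤ dist ((A.card : ℝ)⁻¹ • ∑ x ∈ A, toPoint x) (toPoint a)) := by
  obtain ⟨I, rfl⟩ := exists_eq_image_flipAt hA
  have hinj := flipAt_injective c
  rw [card_image_of_injective _ hinj, sum_image hinj.injOn]
  rw [card_image_of_injective _ hinj] at hcard
  have hℓ : (3 : ℝ) ≤ #I := by exact_mod_cast hcard
  have hI : I.Nonempty := card_pos.1 (by omega)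
  refine ⟨fun a ha => ?_, fun a ha hac => ?_⟩
  · obtain ⟨j, hj, rfl⟩ := mem_image.1 ha
    rw [← sq_lt_one_iff₀ dist_nonneg, dist_centroid_flipAt_flipAt_sq c hI, if_pos hj]
    have : (1 - 2 * 1 : ℝ) / #I < 0 := div_neg_of_neg_of_pos (by norm_num) (by linarith)
    linarith
  rw [← one_le_sq_iff₀ dist_nonneg]
  obtain hk | hk : hammingDist a c = 1 ∨ 2 ≤ hammingDist a c := by
    have := hammingDist_pos.2 hac
    omega
  · obtain ⟨j, rfl⟩ := eq_flipAt_of_hammingDist_eq_one hk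
    have hj : j ∉ I := fun hj => ha (mem_image_of_mem _ hj)
    rw [dist_centroid_flipAt_flipAt_sq c hI, if_neg hj]
    have : 0 ≤ (1 - 2 * 0 : ℝ) / #I := by positivity
    linarith
  · rw [dist_centroid_flipAt_sq c a hI]
    exact one_le_add_one_sub_two_mul_div hℓ (by exact_mod_cast hk)
      (by exact_mod_cast card_le_card (filter_subset_filter _ (subset_univ I)))
end
end

section
/- There exists a function ε : ℕ → ℝ with ε(n) → 0 as n → ∞ such that for every n and every Boolean function f on n variables, NN(f) ≤ (1 + ε(n)) · 2^{n+2}/n. -/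
/-!
Let `k = ⌊log₂ n⌋` and let `W : Fin n → (ZMod 2)^k` be onto. Flipping bit `i` of `x` adds `W i`
to the syndrome `∑_{xᵢ = 1} W i`, so every syndrome class is a covering code of radius 1, and the
smallest one has at most `2^(n-k) < 2^(n+1) / n` words.

Around each codeword `c` put a positive and a negative prototype `q ± t w`. Here `w` is the `±1`
vector pointing from `c` towards its neighbours where `f = 1` and away from those where `f = 0`,
and the centre `q` is shifted slightly along `w` according to `f c`; then on the Hamming ball of
radius 1 around `c` the sign of `⟪x - q, w⟫`, which decides the nearer of the two prototypes, is
the value of `f`. The prototypes lie within `1/10` of `c`, so a point of that ball is nearer to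
them than to the prototypes of any codeword at Hamming distance `≥ 2`. Hence
`NN f ≤ 2 · 2^(n-k) ≤ 2^(n+2) / n`: the bound holds with `ε = 0`.
-/

open Finset

noncomputable section

open scoped RealInnerProductSpace

namespace NNShannon

section HammingCube

variable {ι : Type*} [Fintype ι] [DecidableEq ι]

def flipBit (i : ι) (x : ι → Bool) : ι → Bool := Function.update x i (!x i)

theorem hammingDist_le_one_iff {a c : ι → Bool} :
    hammingDist a c ≤ 1 ↔ a = c ∨ ∃ i, a = flipBit i c := by
  constructor
  · intro h
    rcases Nat.le_one_iff_eq_zero_or_eq_one.mp h with h0 | h1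
    · exact Or.inl (hammingDist_eq_zero.mp h0)
    · obtain ⟨i, hi⟩ := card_eq_one.mp h1
      have hne : ∀ j, a j ≠ c j ↔ j = i := fun j => by
        simpa using congrArg (j ∈ ·) hi
      refine Or.inr ⟨i, funext fun j => ?_⟩
      by_cases hji : j = i
      · subst hji
        simpa [flipBit] using Bool.eq_not.2 ((hne j).2 rfl)
      · simpa [flipBit, hji] using (hne j).not.2 hji
  · rintro (rfl | ⟨i, rfl⟩)
    · simp
    · calc hammingDist (flipBit i c) c ≤ #({i} : Finset ι) :=
            card_le_card fun j hj => by
              by_contra hji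
              simp [flipBit, Function.update_apply, mem_singleton.not.1 hji] at hj
        _ = 1 := card_singleton i

variable {G : Type*} [AddCommGroup G]

def syndrome (W : ι → G) (x : ι → Bool) : G := ∑ i, if x i then W i else 0

theorem syndrome_flipBit (hG : ∀ g : G, g + g = 0) (W : ι → G) (x : ι → Bool) (i : ι) :
    syndrome W (flipBit i x) = syndrome W x + W i := by
  rw [← sub_eq_iff_eq_add', syndrome, syndrome, ← sum_sub_distrib, sum_eq_single i]
  · cases hx : x i <;> simp [flipBit, hx, neg_eq_of_add_eq_zero_left (hG (W i))]
  · intro j _ hj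
    simp [flipBit, Function.update_of_ne hj]
  · simp

theorem exists_syndrome_eq_hammingDist_le_one (hG : ∀ g : G, g + g = 0) {W : ι → G}
    (hW : Function.Surjective W) (s : G) (x : ι → Bool) :
    ∃ c, syndrome W c = s ∧ hammingDist x c ≤ 1 := by
  obtain ⟨i, hi⟩ := hW (s - syndrome W x)
  refine ⟨flipBit i x, by rw [syndrome_flipBit hG, hi, add_sub_cancel], ?_⟩
  rw [hammingDist_comm]
  exact hammingDist_le_one_iff.2 (Or.inr ⟨i, rfl⟩)

end HammingCube

theorem exists_covering_code {n k : ℕ} (hk : 2 ^ k ≤ n) :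
    ∃ C : Finset (Fin n → Bool), (∀ a, ∃ c ∈ C, hammingDist a c ≤ 1) ∧ 2 ^ k * #C ≤ 2 ^ n := by
  have hcard : Fintype.card (Fin k → ZMod 2) = 2 ^ k := by simp
  obtain ⟨e⟩ : Nonempty ((Fin k → ZMod 2) ↪ Fin n) :=
    Function.Embedding.nonempty_of_card_le (by simpa [hcard] using hk)
  have hkn : k ≤ n :=
    ((Nat.pow_lt_pow_iff_right one_lt_two).1 (hk.trans_lt n.lt_two_pow_self)).le
  obtain ⟨s, hs⟩ := Fintype.exists_card_fiber_le_of_card_le_mul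
    (f := syndrome (Function.invFun e)) (n := 2 ^ (n - k))
    (by simp [hcard, ← pow_add, hkn])
  refine ⟨({x | syndrome (Function.invFun e) x = s} : Finset _), fun a => ?_, ?_⟩
  · have hG (g : Fin k → ZMod 2) : g + g = 0 := funext fun j => CharTwo.add_self_eq_zero (g j)
    obtain ⟨c, hc, hac⟩ := exists_syndrome_eq_hammingDist_le_one hG
      (Function.invFun_surjective e.injective) s a
    exact ⟨c, by simpa using hc, hac⟩
  · calc 2 ^ k * #{x | syndrome (Function.invFun e) x = s} ≤ 2 ^ k * 2 ^ (n - k) :=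
          Nat.mul_le_mul_left _ hs
      _ = 2 ^ n := by rw [← pow_add, Nat.add_sub_cancel' hkn]

section InnerProduct

variable {F : Type*} [NormedAddCommGroup F] [InnerProductSpace ℝ F]

theorem dist_add_smul_lt_dist_sub_smul_iff (x q w : F) (t : ℝ) :
    dist x (q + t • w) < dist x (q - t • w) ↔ 0 < t * ⟪x - q, w⟫ := by
  rw [← sq_lt_sq₀ dist_nonneg dist_nonneg, dist_eq_norm, dist_eq_norm,
    show x - (q + t • w) = (x - q) - t • w by abel,
    show x - (q - t • w) = (x - q) + t • w by abel,
    norm_sub_sq_real, norm_add_sq_real, real_inner_smul_right]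
  constructor <;> intro h <;> linarith

end InnerProduct

variable {n : ℕ}

theorem dist_toPoint_sq (a c : Fin n → Bool) :
    dist (toPoint a) (toPoint c) ^ 2 = hammingDist a c := by
  rw [EuclideanSpace.dist_eq, Real.sq_sqrt (sum_nonneg fun _ _ => sq_nonneg _), hammingDist,
    ← sum_boole]
  refine sum_congr rfl fun i _ => ?_
  cases ha : a i <;> cases hc : c i <;> simp [toPoint, boolToR, ha, hc]

theorem eq_of_dist_toPoint_lt_one {a c : Fin n → Bool} (h : dist (toPoint a) (toPoint c) < 1) :
    a = c := by
  have hsq : (hammingDist a c : ℝ) < 1 := by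
    rw [← dist_toPoint_sq]
    nlinarith [dist_nonneg (x := toPoint a) (y := toPoint c)]
  exact hammingDist_lt_one.1 (by exact_mod_cast hsq)

def boolSign (b : Bool) : ℝ := if b then 1 else -1

theorem boolSign_not (b : Bool) : boolSign (!b) = -boolSign b := by
  cases b <;> simp [boolSign]

theorem toPoint_flipBit_sub (i : Fin n) (c : Fin n → Bool) :
    toPoint (flipBit i c) - toPoint c = EuclideanSpace.single i (boolSign (!c i)) := by
  ext j
  by_cases hji : j = i
  · subst hji
    cases hc : c j <;> simp [toPoint, boolToR, flipBit, boolSign, hc]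
  · simp [toPoint, flipBit, hji]

def nnDir (f : (Fin n → Bool) → Bool) (c : Fin n → Bool) : EuclideanSpace ℝ (Fin n) :=
  WithLp.toLp 2 fun i => boolSign (!c i) * boolSign (f (flipBit i c))

theorem norm_nnDir (f : (Fin n → Bool) → Bool) (c : Fin n → Bool) : ‖nnDir f c‖ = √n := by
  have hsq (i : Fin n) : ‖nnDir f c i‖ ^ 2 = 1 := by
    cases hc : c i <;> cases hf : f (flipBit i c) <;> simp [nnDir, boolSign, hc, hf]
  rw [EuclideanSpace.norm_eq, sum_congr rfl fun i _ => hsq i]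
  simp

theorem inner_toPoint_flipBit_sub_nnDir (f : (Fin n → Bool) → Bool) (c : Fin n → Bool)
    (i : Fin n) : ⟪toPoint (flipBit i c) - toPoint c, nnDir f c⟫ = boolSign (f (flipBit i c)) := by
  rw [toPoint_flipBit_sub, EuclideanSpace.inner_single_left]
  cases hc : c i <;> cases hf : f (flipBit i c) <;> simp [nnDir, boolSign, hc, hf]

-- With `‖w‖² = n`, the factor `1 / (20 n)` shifts `⟪x - q, w⟫` by `± 1/20`, small against the
-- values `± 1` at the neighbours of `c`, and keeps the prototypes within `1/10` of `c`.
def nnCenter (f : (Fin n → Bool) → Bool) (c : Fin n → Bool) : EuclideanSpace ℝ (Fin n) :=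
  toPoint c - (boolSign (f c) / (20 * n)) • nnDir f c

def nnProto (f : (Fin n → Bool) → Bool) (c : Fin n → Bool) (b : Bool) :
    EuclideanSpace ℝ (Fin n) :=
  nnCenter f c + (boolSign b / (20 * n)) • nnDir f c

theorem inner_sub_nnCenter (hn : 0 < n) (f : (Fin n → Bool) → Bool) (a c : Fin n → Bool) :
    ⟪toPoint a - nnCenter f c, nnDir f c⟫ =
      ⟪toPoint a - toPoint c, nnDir f c⟫ + boolSign (f c) / 20 := by
  rw [nnCenter, sub_sub_eq_add_sub, add_sub_right_comm, inner_add_left, real_inner_smul_left,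
    real_inner_self_eq_norm_sq, norm_nnDir, Real.sq_sqrt n.cast_nonneg]
  field_simp

theorem boolSign_mul_inner_sub_nnCenter_pos (hn : 0 < n) (f : (Fin n → Bool) → Bool)
    {a c : Fin n → Bool} (h : hammingDist a c ≤ 1) :
    0 < boolSign (f a) * ⟪toPoint a - nnCenter f c, nnDir f c⟫ := by
  rw [inner_sub_nnCenter hn]
  rcases hammingDist_le_one_iff.1 h with rfl | ⟨i, rfl⟩
  · cases f a <;> norm_num [boolSign]
  · rw [inner_toPoint_flipBit_sub_nnDir]
    cases f c <;> cases f (flipBit i c) <;> norm_num [boolSign]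

theorem dist_nnProto_lt (hn : 0 < n) (f : (Fin n → Bool) → Bool) {a c : Fin n → Bool}
    (h : hammingDist a c ≤ 1) :
    dist (toPoint a) (nnProto f c (f a)) < dist (toPoint a) (nnProto f c (!f a)) := by
  rw [nnProto, nnProto, boolSign_not, neg_div, neg_smul, ← sub_eq_add_neg,
    dist_add_smul_lt_dist_sub_smul_iff, div_mul_eq_mul_div]
  exact div_pos (boolSign_mul_inner_sub_nnCenter_pos hn f h) (by positivity)

theorem dist_toPoint_nnProto_le (hn : 0 < n) (f : (Fin n → Bool) → Bool) (c : Fin n → Bool)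
    (b : Bool) : dist (toPoint c) (nnProto f c b) ≤ 1 / 10 := by
  have hn' : (1 : ℝ) ≤ n := by exact_mod_cast hn
  have hsqrt : √(n : ℝ) ≤ n := (Real.sqrt_le_left (by positivity)).2 (by nlinarith)
  have hcoef : |(boolSign b - boolSign (f c)) / (20 * n)| ≤ 1 / (10 * n) := by
    rw [abs_div, abs_of_pos (by positivity : (0 : ℝ) < 20 * n), div_le_div_iff₀ (by positivity)
      (by positivity)]
    cases b <;> cases f c <;> norm_num [boolSign] <;> nlinarith
  calc dist (toPoint c) (nnProto f c b)
      = ‖((boolSign b - boolSign (f c)) / (20 * n)) • nnDir f c‖ := by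
        rw [dist_comm, dist_eq_norm, nnProto, nnCenter]
        congr 1
        module
    _ ≤ 1 / (10 * n) * n := by
        rw [norm_smul, Real.norm_eq_abs, norm_nnDir]
        gcongr
    _ = 1 / 10 := by field_simp

theorem nnProto_true_ne_false (hn : 0 < n) (f : (Fin n → Bool) → Bool) (c c' : Fin n → Bool) :
    nnProto f c true ≠ nnProto f c' false := by
  intro h
  obtain rfl : c = c' := by
    have hc := dist_toPoint_nnProto_le hn f c true
    have hc' := dist_toPoint_nnProto_le hn f c' false
    rw [h] at hc
    exact eq_of_dist_toPoint_lt_one ((dist_triangle_right _ _ _).trans_lt (by linarith))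
  have hdir : nnDir f c ≠ 0 := by
    rw [← norm_pos_iff, norm_nnDir]
    positivity
  have := smul_left_injective ℝ hdir (add_left_cancel h)
  field_simp at this
  norm_num [boolSign] at this

theorem exists_nearest_of_covering {f : (Fin n → Bool) → Bool} {C : Finset (Fin n → Bool)}
    {p : (Fin n → Bool) → Bool → EuclideanSpace ℝ (Fin n)}
    (hC : ∀ a, ∃ c ∈ C, hammingDist a c ≤ 1)
    (hclose : ∀ c b, dist (toPoint c) (p c b) ≤ 1 / 10)
    (hball : ∀ a c, hammingDist a c ≤ 1 →
      dist (toPoint a) (p c (f a)) < dist (toPoint a) (p c (!f a)))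
    (a : Fin n → Bool) :
    ∃ c₀ ∈ C, ∀ c ∈ C, dist (toPoint a) (p c₀ (f a)) < dist (toPoint a) (p c (!f a)) := by
  obtain ⟨c₀, hc₀, hmin⟩ := exists_min_image {c ∈ C | hammingDist a c ≤ 1}
    (fun c => dist (toPoint a) (p c (f a)))
    (by obtain ⟨c, hc⟩ := hC a; exact ⟨c, mem_filter.2 hc⟩)
  rw [mem_filter] at hc₀
  refine ⟨c₀, hc₀.1, fun c hc => ?_⟩
  by_cases hac : hammingDist a c ≤ 1
  · exact (hmin c (mem_filter.2 ⟨hc, hac⟩)).trans_lt (hball a c hac)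
  · -- Hamming distance `≤ 1` means Euclidean distance `≤ 1`, and `≥ 2` means `≥ √2 > 7/5`.
    have hnear : dist (toPoint a) (toPoint c₀) ≤ 1 := by
      have := dist_toPoint_sq a c₀
      have : (hammingDist a c₀ : ℝ) ≤ 1 := by exact_mod_cast hc₀.2
      nlinarith [dist_nonneg (x := toPoint a) (y := toPoint c₀)]
    have hfar : 7 / 5 ≤ dist (toPoint a) (toPoint c) := by
      have := dist_toPoint_sq a c
      have : (2 : ℝ) ≤ hammingDist a c := by exact_mod_cast (not_le.1 hac)
      nlinarith [dist_nonneg (x := toPoint a) (y := toPoint c)]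
    linarith [dist_triangle (toPoint a) (toPoint c₀) (p c₀ (f a)),
      dist_triangle_right (toPoint a) (toPoint c) (p c (!f a)), hclose c₀ (f a), hclose c (!f a)]

theorem isNNRep_image {ι : Type*} [DecidableEq ι] {f : (Fin n → Bool) → Bool} (C : Finset ι)
    (p : ι → Bool → EuclideanSpace ℝ (Fin n)) (hdisj : ∀ c c', p c true ≠ p c' false)
    (hnear : ∀ a, ∃ c₀ ∈ C, ∀ c ∈ C,
      dist (toPoint a) (p c₀ (f a)) < dist (toPoint a) (p c (!f a))) :
    IsNNRep f (C.image (p · true)) (C.image (p · false)) := by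
  refine ⟨disjoint_left.2 ?_, fun a => ⟨fun hfa => ?_, fun hfa => ?_⟩⟩
  · simp only [mem_image]
    rintro _ ⟨c, -, rfl⟩ ⟨c', -, h⟩
    exact hdisj c c' h.symm
  all_goals
    obtain ⟨c₀, hc₀, h⟩ := hnear a
    rw [hfa] at h
    exact ⟨_, mem_image_of_mem _ hc₀, forall_mem_image.2 h⟩

theorem exists_isNNRep_card_le (hn : 0 < n) (f : (Fin n → Bool) → Bool) :
    ∃ P N, IsNNRep f P N ∧ n * #(P ∪ N) ≤ 2 ^ (n + 2) := by
  obtain ⟨C, hC, hCcard⟩ := exists_covering_code (Nat.pow_log_le_self 2 hn.ne')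
  refine ⟨_, _, isNNRep_image C (nnProto f) (nnProto_true_ne_false hn f)
    (exists_nearest_of_covering hC (dist_toPoint_nnProto_le hn f)
      (fun _ _ => dist_nnProto_lt hn f)), ?_⟩
  have hunion : #(C.image (nnProto f · true) ∪ C.image (nnProto f · false)) ≤ 2 * #C :=
    (card_union_le _ _).trans (two_mul #C ▸ add_le_add card_image_le card_image_le)
  calc n * #(C.image (nnProto f · true) ∪ C.image (nnProto f · false))
      ≤ 2 ^ (Nat.log 2 n + 1) * (2 * #C) :=
        Nat.mul_le_mul (Nat.lt_pow_succ_log_self one_lt_two n).le hunion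
    _ = 4 * (2 ^ Nat.log 2 n * #C) := by ring
    _ ≤ 4 * 2 ^ n := Nat.mul_le_mul_left 4 hCcard
    _ = 2 ^ (n + 2) := by ring

end NNShannon

/-- There is a function `ε(n) → 0` such that every Boolean function `f`
on `n ≥ 1` variables satisfies `NN(f) ≤ (1 + ε(n)) · 2^(n+2) / n`. -/
theorem NN_upper_shannon :
    ∃ ε : ℕ → ℝ, Filter.Tendsto ε Filter.atTop (nhds 0) ∧
      ∀ n : ℕ, 1 ≤ n → ∀ f : (Fin n → Bool) → Bool,
        (NN f : ℝ) ≤ (1 + ε n) * 2 ^ (n + 2) / n := by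
  refine ⟨0, tendsto_const_nhds, fun n hn f => ?_⟩
  obtain ⟨P, N, hrep, hcard⟩ := NNShannon.exists_isNNRep_card_le hn f
  have hNN : NN f ≤ #(P ∪ N) := Nat.sInf_le ⟨P, N, hrep, rfl⟩
  have hbound : n * NN f ≤ 2 ^ (n + 2) := (Nat.mul_le_mul_left n hNN).trans hcard
  rw [Pi.zero_apply, add_zero, one_mul, le_div_iff₀ (by exact_mod_cast hn), mul_comm]
  exact_mod_cast hbound
end
end

section
/- Almost all n-variable Boolean functions f satisfy NN(f) > 2^{n/2}/n; that is, the fraction of Boolean functions f : {0,1}^n → {0,1} with NN(f) ≤ 2^{n/2}/n, taken among all 2^{2^n} Boolean functions on n variables, tends to 0 as n → ∞. -/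
open Finset

noncomputable section

/-!
An NN representation of size at most `m` is determined by the labels of `m` prototypes
`p₁, …, pₘ` together with the outcomes of the `2ⁿ m²` comparisons
`‖a - pⱼ‖² < ‖a - pₖ‖²`. Each comparison is the sign of an affine function of the parameter
`(pᵢ, ‖pᵢ‖²)ᵢ ∈ ℝ^{m(n+1)}`, and `K` affine functions on a `d`-dimensional space realize at most
`(K + 1)^d` sign patterns: adding one function `L` doubles only those patterns that are also
realized on the hyperplane `L = 0`, which has dimension `d - 1`. So at most
`2^m (2ⁿ m² + 1)^{m(n+1)} = 2^{O(m n²)}` Boolean functions have `NN f ≤ m`, and for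
`m ≈ 2^{n/2} / n` this is at most `2^{2ⁿ - n}`.
-/

theorem Finset.filter_eq_erase_filter_insert {α : Type*} [DecidableEq α] {s : Finset α} {a : α}
    (p : α → Prop) [DecidablePred p] (ha : a ∉ s) :
    s.filter p = ((insert a s).filter p).erase a := by
  rw [← filter_erase, erase_insert ha]

section SignPatterns

open Module

variable {V : Type*} [AddCommGroup V] [Module ℝ V] {ι : Type*}

open Classical in
def signPatterns (L : ι → V →ᵃ[ℝ] ℝ) (s : Finset ι) : Finset (Finset ι) :=
  {T ∈ s.powerset | ∃ θ, {j ∈ s | L j θ < 0} = T}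

theorem AffineMap.lt_zero_iff_of_mem_segment (f : V →ᵃ[ℝ] ℝ) {θ₁ θ₂ θ : V}
    (hθ : θ ∈ segment ℝ θ₁ θ₂) (h : f θ₁ < 0 ↔ f θ₂ < 0) : f θ < 0 ↔ f θ₁ < 0 := by
  by_cases h₁ : f θ₁ < 0
  · exact iff_of_true (((convex_Iio 0).affine_preimage f).segment_subset h₁ (h.mp h₁) hθ) h₁
  · have h₂ : ¬f θ₂ < 0 := mt h.mpr h₁
    rw [not_lt] at h₁ h₂
    exact iff_of_false (not_lt.mpr
      (((convex_Ici 0).affine_preimage f).segment_subset h₁ h₂ hθ : 0 ≤ f θ)) (not_lt.mpr h₁)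

variable {L : ι → V →ᵃ[ℝ] ℝ} {s T : Finset ι} {a : ι}

theorem mem_signPatterns : T ∈ signPatterns L s ↔ ∃ θ, {j ∈ s | L j θ < 0} = T := by
  classical
  simp only [signPatterns, mem_filter, mem_powerset, and_iff_right_iff_imp]
  rintro ⟨θ, rfl⟩
  exact filter_subset _ _

theorem card_signPatterns_le_one
    (h : ∀ θ θ' : V, {j ∈ s | L j θ < 0} = {j ∈ s | L j θ' < 0}) :
    #(signPatterns L s) ≤ 1 := by
  refine card_le_one.mpr fun T hT T' hT' => ?_
  obtain ⟨θ, rfl⟩ := mem_signPatterns.mp hT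
  obtain ⟨θ', rfl⟩ := mem_signPatterns.mp hT'
  exact h θ θ'

theorem exists_eq_zero_filter_eq {θ₁ θ₂ : V} (h₁ : L a θ₁ < 0) (h₂ : 0 ≤ L a θ₂)
    (h : {j ∈ s | L j θ₁ < 0} = {j ∈ s | L j θ₂ < 0}) :
    ∃ θ, L a θ = 0 ∧ {j ∈ s | L j θ < 0} = {j ∈ s | L j θ₁ < 0} := by
  have h0 : (0 : ℝ) ∈ L a '' segment ℝ θ₁ θ₂ := by
    rw [image_segment, segment_eq_uIcc]
    exact Set.mem_uIcc.mpr (Or.inl ⟨h₁.le, h₂⟩)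
  obtain ⟨θ, hθ, hθ0⟩ := h0
  refine ⟨θ, hθ0, filter_congr fun j hj => (L j).lt_zero_iff_of_mem_segment hθ ?_⟩
  simpa [hj] using Finset.ext_iff.mp h j

theorem exists_signPatterns_of_eq_zero [FiniteDimensional ℝ V] (ha : (L a).linear ≠ 0)
    (s : Finset ι) :
    ∃ (W : Submodule ℝ V) (M : ι → W →ᵃ[ℝ] ℝ), finrank ℝ W + 1 = finrank ℝ V ∧
      ∀ θ, L a θ = 0 → {j ∈ s | L j θ < 0} ∈ signPatterns M s := by
  have hsurj := LinearMap.surjective_of_ne_zero ha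
  obtain ⟨v, hv⟩ := hsurj (-L a 0)
  have hv0 : L a v = 0 := by
    simpa [hv] using (L a).map_vadd 0 v
  refine ⟨LinearMap.ker (L a).linear,
    fun j => (L j).comp ((AffineEquiv.vaddConst ℝ v).toAffineMap.comp
      (LinearMap.ker (L a).linear).subtype.toAffineMap), ?_, fun θ hθ => ?_⟩
  · rw [← LinearMap.finrank_range_add_finrank_ker (L a).linear, LinearMap.range_eq_top.mpr hsurj,
      finrank_top, Module.finrank_self, add_comm]
  · have hmem : θ -ᵥ v ∈ LinearMap.ker (L a).linear := by
      rw [LinearMap.mem_ker, AffineMap.linearMap_vsub, hθ, hv0, vsub_self]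
    exact mem_signPatterns.mpr ⟨⟨_, hmem⟩, by simp⟩

variable [DecidableEq ι]

/-- The sign patterns on `s` that extend to `insert a s` both with `a` negative and with `a`
nonnegative. -/
def splitPatterns (L : ι → V →ᵃ[ℝ] ℝ) (s : Finset ι) (a : ι) : Finset (Finset ι) :=
  (signPatterns L (insert a s)).memberSubfamily a ∩
    (signPatterns L (insert a s)).nonMemberSubfamily a

theorem erase_mem_signPatterns (ha : a ∉ s) (hT : T ∈ signPatterns L (insert a s)) :
    T.erase a ∈ signPatterns L s := by
  obtain ⟨θ, rfl⟩ := mem_signPatterns.mp hT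
  exact mem_signPatterns.mpr ⟨θ, filter_eq_erase_filter_insert _ ha⟩

theorem exists_lt_zero_le_of_mem_splitPatterns (ha : a ∉ s) (hT : T ∈ splitPatterns L s a) :
    ∃ θ₁ θ₂, L a θ₁ < 0 ∧ 0 ≤ L a θ₂ ∧ {j ∈ s | L j θ₁ < 0} = T ∧ {j ∈ s | L j θ₂ < 0} = T := by
  rw [splitPatterns, mem_inter, mem_memberSubfamily, mem_nonMemberSubfamily] at hT
  obtain ⟨⟨h₁, haT⟩, h₂, -⟩ := hT
  obtain ⟨θ₁, hθ₁⟩ := mem_signPatterns.mp h₁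
  obtain ⟨θ₂, hθ₂⟩ := mem_signPatterns.mp h₂
  refine ⟨θ₁, θ₂, ?_, ?_, ?_, ?_⟩
  · simpa using (Finset.ext_iff.mp hθ₁ a).mpr (mem_insert_self a T)
  · simpa [haT] using Finset.ext_iff.mp hθ₂ a
  · rw [filter_eq_erase_filter_insert _ ha, hθ₁, erase_insert haT]
  · rw [filter_eq_erase_filter_insert _ ha, hθ₂, erase_eq_of_notMem haT]

theorem splitPatterns_eq_empty (ha : a ∉ s) (hlin : (L a).linear = 0) :
    splitPatterns L s a = ∅ := by
  obtain ⟨c, hc⟩ := (L a).linear_eq_zero_iff_exists_const.mp hlin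
  refine eq_empty_of_forall_notMem fun T hT => ?_
  obtain ⟨θ₁, θ₂, h₁, h₂, -⟩ := exists_lt_zero_le_of_mem_splitPatterns ha hT
  rw [hc] at h₁ h₂
  exact (h₁.trans_le h₂).false

theorem exists_card_splitPatterns_le [FiniteDimensional ℝ V] (ha : a ∉ s)
    (hlin : (L a).linear ≠ 0) :
    ∃ (W : Submodule ℝ V) (M : ι → W →ᵃ[ℝ] ℝ), finrank ℝ W + 1 = finrank ℝ V ∧
      #(splitPatterns L s a) ≤ #(signPatterns M s) := by
  obtain ⟨W, M, hW, hM⟩ := exists_signPatterns_of_eq_zero hlin s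
  refine ⟨W, M, hW, card_le_card fun T hT => ?_⟩
  obtain ⟨θ₁, θ₂, h₁, h₂, hθ₁, hθ₂⟩ := exists_lt_zero_le_of_mem_splitPatterns ha hT
  obtain ⟨θ, hθ0, hθ⟩ := exists_eq_zero_filter_eq h₁ h₂ (hθ₁.trans hθ₂.symm)
  simpa [hθ, hθ₁] using hM θ hθ0

theorem card_signPatterns_insert_le (ha : a ∉ s) :
    #(signPatterns L (insert a s)) ≤ #(signPatterns L s) + #(splitPatterns L s a) := by
  set 𝒜 := signPatterns L (insert a s)
  have hsub : 𝒜.memberSubfamily a ∪ 𝒜.nonMemberSubfamily a ⊆ signPatterns L s := by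
    intro T hT
    rcases mem_union.mp hT with hT | hT
    · obtain ⟨hT, haT⟩ := mem_memberSubfamily.mp hT
      simpa [haT] using erase_mem_signPatterns ha hT
    · obtain ⟨hT, haT⟩ := mem_nonMemberSubfamily.mp hT
      simpa [haT] using erase_mem_signPatterns ha hT
  rw [← card_memberSubfamily_add_card_nonMemberSubfamily a 𝒜, ← card_union_add_card_inter,
    splitPatterns]
  exact Nat.add_le_add_right (card_le_card hsub) _

end SignPatterns

open Module in
theorem card_signPatterns_le {V : Type*} [AddCommGroup V] [Module ℝ V] [FiniteDimensional ℝ V]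
    {ι : Type*} (L : ι → V →ᵃ[ℝ] ℝ) (s : Finset ι) :
    #(signPatterns L s) ≤ (#s + 1) ^ finrank ℝ V := by
  classical
  induction hd : finrank ℝ V generalizing V s with
  | zero =>
    have := Module.finrank_zero_iff.mp hd
    simpa using card_signPatterns_le_one fun θ θ' => by rw [Subsingleton.elim θ θ']
  | succ d ihd =>
    induction s using Finset.induction_on with
    | empty => simpa using card_signPatterns_le_one (L := L) (s := ∅) fun _ _ => rfl
    | insert a s ha ih =>
      have hsplit : #(splitPatterns L s a) ≤ (#s + 1) ^ d := by
        by_cases hlin : (L a).linear = 0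
        · simp [splitPatterns_eq_empty ha hlin]
        · obtain ⟨W, M, hW, hM⟩ := exists_card_splitPatterns_le ha hlin
          exact hM.trans (ihd M s (by omega))
      calc #(signPatterns L (insert a s)) ≤ (#s + 1) ^ (d + 1) + (#s + 1) ^ d :=
            (card_signPatterns_insert_le ha).trans (Nat.add_le_add ih hsplit)
        _ = (#s + 2) * (#s + 1) ^ d := by ring
        _ ≤ (#s + 2) * (#s + 2) ^ d := Nat.mul_le_mul_left _ (Nat.pow_le_pow_left (by omega) d)
        _ = (#(insert a s) + 1) ^ (d + 1) := by rw [card_insert_of_notMem ha]; ring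

section NearestNeighbor

open Module

section Dist

variable {E : Type*} [Dist E] {m : ℕ}

open Classical in
def nnClassify (p : Fin m → E) (lab : Fin m → Bool) (x : E) : Bool :=
  decide (∃ j, lab j = true ∧ ∀ k, lab k = false → dist x (p j) < dist x (p k))

theorem exists_nnClassify_eq [DecidableEq E] {P N : Finset E} (hPN : Disjoint P N)
    (hne : (P ∪ N).Nonempty) (hm : #(P ∪ N) ≤ m) : ∃ (p : Fin m → E) (lab : Fin m → Bool),
      ∀ x, nnClassify p lab x = decide (∃ b ∈ P, ∀ c ∈ N, dist x b < dist x c) := by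
  classical
  have : Nonempty (P ∪ N :) := hne.to_subtype
  obtain ⟨e⟩ := Function.Embedding.nonempty_of_card_le (α := (P ∪ N :)) (β := Fin m)
    (by simpa using hm)
  set u : Fin m → (P ∪ N :) := Function.invFun e
  have hu : Function.Surjective u := Function.invFun_surjective e.injective
  refine ⟨fun j => u j, fun j => decide ((u j : E) ∈ P), fun x => ?_⟩
  simp only [nnClassify, decide_eq_decide, decide_eq_true_eq, decide_eq_false_iff_not]
  constructor
  · rintro ⟨j, hjP, hj⟩
    refine ⟨u j, hjP, fun c hc => ?_⟩
    obtain ⟨k, hk⟩ := hu ⟨c, mem_union_right P hc⟩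
    simpa [hk] using hj k (by simpa [hk] using disjoint_right.mp hPN hc)
  · rintro ⟨b, hb, hbN⟩
    obtain ⟨j, hj⟩ := hu ⟨b, mem_union_left N hb⟩
    exact ⟨j, by simpa [hj], fun k hk => by
      simpa [hj] using hbN _ ((mem_union.mp (u k).2).resolve_left hk)⟩

end Dist

variable {E : Type*} [NormedAddCommGroup E] [InnerProductSpace ℝ E] {m : ℕ}

/-- Comparing `dist x (p j)` with `dist x (p k)` becomes linear once `‖p i‖²` is treated as an
extra coordinate `(θ i).2`. -/
def distCompare (x : E) (j k : Fin m) : (Fin m → E × ℝ) →ₗ[ℝ] ℝ where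
  toFun θ := (θ j).2 - (θ k).2 - 2 * inner ℝ x ((θ j).1 - (θ k).1)
  map_add' θ θ' := by
    simp only [Pi.add_apply, Prod.fst_add, Prod.snd_add, inner_sub_right, inner_add_right]
    ring
  map_smul' c θ := by
    simp only [Pi.smul_apply, Prod.smul_fst, Prod.smul_snd, inner_sub_right, inner_smul_right,
      smul_eq_mul, RingHom.id_apply]
    ring

theorem distCompare_lt_zero_iff (x : E) (p : Fin m → E) (j k : Fin m) :
    distCompare x j k (fun i => (p i, ‖p i‖ ^ 2)) < 0 ↔ dist x (p j) < dist x (p k) := by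
  have h : distCompare x j k (fun i => (p i, ‖p i‖ ^ 2)) = ‖x - p j‖ ^ 2 - ‖x - p k‖ ^ 2 := by
    simp only [distCompare, LinearMap.coe_mk, AddHom.coe_mk, norm_sub_sq_real, inner_sub_right]
    ring
  rw [h, sub_neg, dist_eq_norm, dist_eq_norm]
  exact pow_lt_pow_iff_left₀ (norm_nonneg _) (norm_nonneg _) two_ne_zero

open Classical in
def nnDecode {α : Type*} (lab : Fin m → Bool) (T : Finset (α × Fin m × Fin m)) (a : α) : Bool :=
  decide (∃ j, lab j = true ∧ ∀ k, lab k = false → (a, j, k) ∈ T)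

theorem card_le_of_forall_nnClassify_comp_eq [FiniteDimensional ℝ E] {α : Type*} [Fintype α]
    (q : α → E) (F : Finset (α → Bool))
    (hF : ∀ g ∈ F, ∃ (p : Fin m → E) (lab : Fin m → Bool), nnClassify p lab ∘ q = g) :
    #F ≤ 2 ^ m * (Fintype.card α * m ^ 2 + 1) ^ (m * (finrank ℝ E + 1)) := by
  classical
  set C : α × Fin m × Fin m → (Fin m → E × ℝ) →ᵃ[ℝ] ℝ :=
    fun c => (distCompare (q c.1) c.2.1 c.2.2).toAffineMap
  have hsub : F ⊆ (univ ×ˢ signPatterns C univ).image fun x => nnDecode x.1 x.2 := by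
    intro g hg
    obtain ⟨p, lab, rfl⟩ := hF g hg
    set θ : Fin m → E × ℝ := fun i => (p i, ‖p i‖ ^ 2)
    refine mem_image.mpr ⟨(lab, ({c | C c θ < 0} : Finset _)),
      mem_product.mpr ⟨mem_univ _, mem_signPatterns.mpr ⟨θ, rfl⟩⟩, ?_⟩
    funext a
    simp [nnDecode, nnClassify, C, θ, distCompare_lt_zero_iff]
  calc #F ≤ #(univ ×ˢ signPatterns C univ) := (card_le_card hsub).trans card_image_le
    _ ≤ 2 ^ m * (Fintype.card α * m ^ 2 + 1) ^ (m * (finrank ℝ E + 1)) := by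
      rw [card_product]
      gcongr
      · simp
      · simpa [sq, Module.finrank_pi_fintype, Module.finrank_prod] using
          card_signPatterns_le C univ

end NearestNeighbor

namespace IsNNRep

variable {n : ℕ} {f : (Fin n → Bool) → Bool} {P N : Finset (EuclideanSpace ℝ (Fin n))}

theorem apply_eq_decide (h : IsNNRep f P N) (a : Fin n → Bool) :
    f a = decide (∃ b ∈ P, ∀ c ∈ N, dist (toPoint a) b < dist (toPoint a) c) := by
  cases hfa : f a
  · obtain ⟨b, hbN, hb⟩ := (h.2 a).2 hfa
    simp only [false_eq_decide_iff, not_exists, not_and, not_forall, not_lt]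
    exact fun c hcP => ⟨b, hbN, (hb c hcP).le⟩
  · exact (decide_eq_true ((h.2 a).1 hfa)).symm

theorem union_nonempty (h : IsNNRep f P N) : (P ∪ N).Nonempty := by
  cases hf : f fun _ => false
  · obtain ⟨b, hb, -⟩ := (h.2 _).2 hf
    exact ⟨b, mem_union_right P hb⟩
  · obtain ⟨b, hb, -⟩ := (h.2 _).1 hf
    exact ⟨b, mem_union_left N hb⟩

end IsNNRep

theorem exists_isNNRep_card_eq_NN {n : ℕ} (f : (Fin n → Bool) → Bool) :
    ∃ P N, IsNNRep f P N ∧ #(P ∪ N) = NN f :=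
  Nat.sInf_mem (s := {m | ∃ P N, IsNNRep f P N ∧ #(P ∪ N) = m})
    ⟨_, _, _, isNNRep_image_toPoint f, rfl⟩

theorem exists_nnClassify_comp_toPoint_eq {n m : ℕ} {f : (Fin n → Bool) → Bool}
    (hf : NN f ≤ m) : ∃ (p : Fin m → EuclideanSpace ℝ (Fin n)) (lab : Fin m → Bool),
      nnClassify p lab ∘ toPoint = f := by
  obtain ⟨P, N, hrep, hcard⟩ := exists_isNNRep_card_eq_NN f
  obtain ⟨p, lab, hpl⟩ := exists_nnClassify_eq hrep.1 hrep.union_nonempty (hcard ▸ hf)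
  exact ⟨p, lab, funext fun a => (hpl _).trans (hrep.apply_eq_decide a).symm⟩

open Classical in
theorem card_filter_NN_le (n m : ℕ) :
    #{f : (Fin n → Bool) → Bool | NN f ≤ m} ≤ 2 ^ m * (2 ^ n * m ^ 2 + 1) ^ (m * (n + 1)) := by
  simpa using card_le_of_forall_nnClassify_comp_eq (m := m) toPoint _ fun f hf =>
    exists_nnClassify_comp_toPoint_eq (mem_filter.mp hf).2

theorem mul_sq_le_two_pow {n : ℕ} (hn : 20 ≤ n) : 144 * n ^ 2 ≤ 2 ^ n := by
  induction n, hn using Nat.le_induction with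
  | base => norm_num
  | succ n hn ih =>
    calc 144 * (n + 1) ^ 2 ≤ 2 * (144 * n ^ 2) := by nlinarith
      _ ≤ 2 * 2 ^ n := Nat.mul_le_mul_left 2 ih
      _ = 2 ^ (n + 1) := (pow_succ' 2 n).symm

theorem le_sqrt_two_pow_div {n k : ℕ} (hn : 0 < n) (hk : (k : ℝ) ≤ 2 ^ ((n : ℝ) / 2) / n) :
    k ≤ Nat.sqrt (2 ^ n) / n := by
  have hkn : (k * n : ℝ) ≤ 2 ^ ((n : ℝ) / 2) := by
    rwa [le_div_iff₀ (by exact_mod_cast hn)] at hk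
  have hsq : ((k * n : ℕ) : ℝ) ^ 2 ≤ ((2 ^ n : ℕ) : ℝ) := by
    calc ((k * n : ℕ) : ℝ) ^ 2 ≤ ((2 : ℝ) ^ ((n : ℝ) / 2)) ^ 2 := by
          push_cast; gcongr
      _ = ((2 ^ n : ℕ) : ℝ) := by
          rw [← Real.rpow_natCast, ← Real.rpow_mul (by norm_num)]
          norm_num
  rw [Nat.le_div_iff_mul_le hn, Nat.le_sqrt']
  exact_mod_cast hsq

theorem two_pow_mul_le_two_pow_two_pow {n m : ℕ} (hn : 20 ≤ n) (hm : (m * n) ^ 2 ≤ 2 ^ n) :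
    2 ^ m * (2 ^ n * m ^ 2 + 1) ^ (m * (n + 1)) * 2 ^ n ≤ 2 ^ 2 ^ n := by
  have h144 := mul_sq_le_two_pow hn
  have hm2 : m ^ 2 ≤ 2 ^ n :=
    (Nat.pow_le_pow_left (Nat.le_mul_of_pos_right m (by omega)) 2).trans hm
  have hbase : 2 ^ n * m ^ 2 + 1 ≤ 2 ^ (2 * n + 1) := by
    have : 1 ≤ 2 ^ n * 2 ^ n := Nat.one_le_iff_ne_zero.mpr (by positivity)
    calc 2 ^ n * m ^ 2 + 1 ≤ 2 ^ n * 2 ^ n + 2 ^ n * 2 ^ n := by gcongr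
      _ = 2 ^ (2 * n + 1) := by ring
  have hexp : m + (2 * n + 1) * (m * (n + 1)) + n ≤ 2 ^ n := by
    have h12 : 12 * n * (m * n) ≤ 2 ^ n := by
      rw [← Nat.pow_le_pow_iff_left two_ne_zero]
      calc (12 * n * (m * n)) ^ 2 = 144 * n ^ 2 * (m * n) ^ 2 := by ring
        _ ≤ 2 ^ n * 2 ^ n := Nat.mul_le_mul h144 hm
        _ = (2 ^ n) ^ 2 := by ring
    nlinarith
  calc 2 ^ m * (2 ^ n * m ^ 2 + 1) ^ (m * (n + 1)) * 2 ^ n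
      ≤ 2 ^ m * (2 ^ (2 * n + 1)) ^ (m * (n + 1)) * 2 ^ n := by gcongr
    _ = 2 ^ (m + (2 * n + 1) * (m * (n + 1)) + n) := by rw [← pow_mul, ← pow_add, ← pow_add]
    _ ≤ 2 ^ 2 ^ n := Nat.pow_le_pow_right two_pos hexp

open Classical in
/-- Almost all `n`-variable Boolean functions `f` satisfy
`NN(f) > 2^(n/2) / n`: the fraction of `f : {0,1}^n → {0,1}` with
`NN(f) ≤ 2^(n/2) / n`, among all `2^(2^n)` Boolean functions, tends to `0`. -/
theorem NN_lower_almost_all :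
    Filter.Tendsto (fun n : ℕ =>
      ((Finset.univ.filter (fun f : (Fin n → Bool) → Bool =>
          (NN f : ℝ) ≤ 2 ^ ((n : ℝ) / 2) / n)).card : ℝ) / 2 ^ (2 ^ n))
      Filter.atTop (nhds 0) := by
  refine squeeze_zero' (.of_forall fun n => by positivity) ?_
    (tendsto_pow_atTop_nhds_zero_of_lt_one (by norm_num) (by norm_num : (1 / 2 : ℝ) < 1))
  filter_upwards [Filter.eventually_ge_atTop 20] with n hn
  set m := Nat.sqrt (2 ^ n) / n
  have hsub : univ.filter (fun f : (Fin n → Bool) → Bool => (NN f : ℝ) ≤ 2 ^ ((n : ℝ) / 2) / n) ⊆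
      univ.filter fun f => NN f ≤ m :=
    monotone_filter_right _ fun _ _ => le_sqrt_two_pow_div (by omega)
  have hm : (m * n) ^ 2 ≤ 2 ^ n :=
    (Nat.pow_le_pow_left (Nat.div_mul_le_self _ n) 2).trans (Nat.sqrt_le' _)
  have hcard := (Nat.mul_le_mul_right (2 ^ n) ((card_le_card hsub).trans
    (card_filter_NN_le n m))).trans (two_pow_mul_le_two_pow_two_pow hn hm)
  rw [div_le_iff₀ (by positivity), one_div_pow, one_div_mul_eq_div, le_div_iff₀ (by positivity)]
  exact_mod_cast hcard
end
end

section
/- If a Boolean function f : {0,1}^n → {0,1} has a nearest neighbor representation with m prototypes, then f has a sign-representation over {1,2} having m terms. -/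
open Finset

noncomputable section

/-- `Σ_j c j * Π_i x̃_i ^ (e j i)` is a sign-representation of `f` over `{1, 2}`:
substituting `x̃ᵢ = 2 ^ xᵢ ∈ {1, 2}`, the polynomial is nonnegative exactly on the
true points of `f`. -/
def IsSignRep12 {n m : ℕ} (f : (Fin n → Bool) → Bool)
    (c : Fin m → ℝ) (e : Fin m → Fin n → ℕ) : Prop :=
  ∀ x : Fin n → Bool,
    (f x = true ↔ 0 ≤ ∑ j, c j * ∏ i, (if x i then (2 : ℝ) else 1) ^ (e j i))

/-!
For a Boolean point `x`, `‖x - p‖² = ‖x‖² - (2⟪x, p⟫ - ‖p‖²)`, so `f x` records whether the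
affine function `G_p(x) = 2⟪x, p⟫ - ‖p‖²` attains its strict maximum over the prototypes on `P`
or on `N`. Multiplying all `G_p` by a large `K` makes the maximiser win by more than `n + m`;
after a common shift of the linear coefficients, which changes no comparison, rounding them down
to natural numbers loses at most `n`. Then `∑_{p ∈ P} 2^{G_p(x)} - ∑_{p ∈ N} 2^{G_p(x)}` has
the sign of its largest term, and each `2^{G_p(x)}` is a real constant times a monomial in the
`x̃ᵢ = 2^{xᵢ}` with natural exponents.
-/

section

variable {n : ℕ} {α : Type*}

theorem dist_lt_dist_iff_inner {E : Type*} [NormedAddCommGroup E] [InnerProductSpace ℝ E]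
    (a b c : E) :
    dist a b < dist a c ↔ 2 * inner ℝ a c - ‖c‖ ^ 2 < 2 * inner ℝ a b - ‖b‖ ^ 2 := by
  rw [← sq_lt_sq₀ dist_nonneg dist_nonneg, dist_eq_norm, dist_eq_norm, norm_sub_sq_real,
    norm_sub_sq_real]
  constructor <;> intro h <;> linarith

theorem inner_toPoint_s11 (x : Fin n → Bool) (p : EuclideanSpace ℝ (Fin n)) :
    inner ℝ (toPoint x) p = ∑ i, if x i then p i else 0 := by
  rw [PiLp.inner_apply]
  refine Finset.sum_congr rfl fun i _ => ?_
  by_cases hx : x i <;> simp [hx, toPoint, boolToR]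

def evalAffine (u : Fin n → ℝ) (v : ℝ) (x : Fin n → Bool) : ℝ :=
  v + ∑ i, if x i then u i else 0

theorem evalAffine_add_const (u : Fin n → ℝ) (v t : ℝ) (x : Fin n → Bool) :
    evalAffine (fun i => u i + t) v x = evalAffine u v x + ∑ i, if x i then t else 0 := by
  simp only [evalAffine, ite_add_zero, sum_add_distrib]
  ring

theorem evalAffine_two_mul_eq_inner (p : EuclideanSpace ℝ (Fin n)) (x : Fin n → Bool) :
    evalAffine (fun i => 2 * p i) (-‖p‖ ^ 2) x = 2 * inner ℝ (toPoint x) p - ‖p‖ ^ 2 := by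
  simp only [evalAffine, inner_toPoint_s11, mul_sum, mul_ite, mul_zero]
  ring

theorem two_rpow_evalAffine (e : Fin n → ℕ) (v : ℝ) (x : Fin n → Bool) :
    (2 : ℝ) ^ evalAffine (fun i => (e i : ℝ)) v x
      = 2 ^ v * ∏ i, (if x i then (2 : ℝ) else 1) ^ e i := by
  rw [evalAffine, Real.rpow_add two_pos, Real.rpow_sum_of_pos two_pos]
  congr 1
  refine Finset.prod_congr rfl fun i _ => ?_
  cases x i <;> simp

theorem evalAffine_natFloor_bounds {u : Fin n → ℝ} (hu : ∀ i, 0 ≤ u i) {K : ℝ} (hK : 0 ≤ K)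
    (v : ℝ) (x : Fin n → Bool) :
    K * evalAffine u v x - n ≤ evalAffine (fun i => (⌊K * u i⌋₊ : ℝ)) (K * v) x ∧
      evalAffine (fun i => (⌊K * u i⌋₊ : ℝ)) (K * v) x ≤ K * evalAffine u v x := by
  have hKu : ∀ i, 0 ≤ K * u i := fun i => mul_nonneg hK (hu i)
  have hlow :
      ∑ i, ((if x i then K * u i else 0) - 1) ≤ ∑ i, if x i then (⌊K * u i⌋₊ : ℝ) else 0 :=
    Finset.sum_le_sum fun i _ => by
      split
      · linarith [Nat.lt_floor_add_one (K * u i)]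
      · norm_num
  have hupp : ∑ i, (if x i then (⌊K * u i⌋₊ : ℝ) else 0) ≤ ∑ i, if x i then K * u i else 0 :=
    Finset.sum_le_sum fun i _ => by
      split
      · exact Nat.floor_le (hKu i)
      · rfl
  simp only [evalAffine, mul_add, Finset.mul_sum, mul_ite, mul_zero]
  simp only [Finset.sum_sub_distrib, Finset.sum_const, Finset.card_univ, Fintype.card_fin,
    nsmul_eq_mul, mul_one] at hlow
  constructor <;> linarith

theorem sum_lt_sum_of_card_mul_lt {A B : Finset α} {w : α → ℝ} (hw : ∀ p ∈ A, 0 < w p)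
    {b : α} (hb : b ∈ A) (h : ∀ c ∈ B, #B * w c < w b) :
    ∑ c ∈ B, w c < ∑ p ∈ A, w p := by
  have hbA : w b ≤ ∑ p ∈ A, w p := Finset.single_le_sum (fun p hp => (hw p hp).le) hb
  rcases B.eq_empty_or_nonempty with rfl | hB
  · simpa using (hw b hb).trans_le hbA
  · have hcard : (0 : ℝ) < #B := by exact_mod_cast hB.card_pos
    have : #B * ∑ c ∈ B, w c < #B * w b := by
      rw [Finset.mul_sum]
      calc ∑ c ∈ B, #B * w c < ∑ _c ∈ B, w b := Finset.sum_lt_sum_of_nonempty hB h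
        _ = #B * w b := by rw [Finset.sum_const, nsmul_eq_mul]
    linarith [lt_of_mul_lt_mul_left this hcard.le]

theorem card_mul_two_rpow_lt {k m : ℕ} (hk : k ≤ m) {y z : ℝ} (h : y + m < z) :
    k * (2 : ℝ) ^ y < 2 ^ z :=
  calc k * (2 : ℝ) ^ y ≤ m * 2 ^ y := by gcongr
    _ < 2 ^ m * 2 ^ y := by gcongr; exact_mod_cast Nat.lt_two_pow_self
    _ = 2 ^ (y + m) := by rw [Real.rpow_add two_pos, Real.rpow_natCast, mul_comm]
    _ < 2 ^ z := Real.rpow_lt_rpow_of_exponent_lt one_lt_two h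

theorem eventually_exists_mul_add_lt {S T : Finset α} {g : α → ℝ} (h : ∃ b ∈ S, ∀ c ∈ T, g c < g b)
    (r : ℝ) : ∀ᶠ K in Filter.atTop, ∃ b ∈ S, ∀ c ∈ T, K * g c + r < K * g b := by
  obtain ⟨b, hb, hbc⟩ := h
  have hT : ∀ᶠ K in Filter.atTop, ∀ c ∈ T, r < K * (g b - g c) :=
    (Filter.eventually_all_finset T).2 fun c hc =>
      (Filter.tendsto_id.atTop_mul_const (by linarith [hbc c hc])).eventually_gt_atTop r
  filter_upwards [hT] with K hK
  exact ⟨b, hb, fun c hc => by linarith [hK c hc, mul_sub K (g b) (g c)]⟩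

def IsArgmaxRep (f : (Fin n → Bool) → Bool) (A B : Finset α) (G : α → (Fin n → Bool) → ℝ)
    (r : ℝ) : Prop :=
  ∀ x, (f x = true → ∃ b ∈ A, ∀ c ∈ B, G c x + r < G b x) ∧
    (f x = false → ∃ b ∈ B, ∀ c ∈ A, G c x + r < G b x)

theorem IsNNRep.isArgmaxRep_neg_dist {f : (Fin n → Bool) → Bool}
    {P N : Finset (EuclideanSpace ℝ (Fin n))} (h : IsNNRep f P N) :
    IsArgmaxRep f P N (fun p x => -dist (toPoint x) p) 0 := fun x =>
  ⟨fun hx => by simpa using (h.2 x).1 hx, fun hx => by simpa using (h.2 x).2 hx⟩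

namespace IsArgmaxRep

variable {f : (Fin n → Bool) → Bool} {A B : Finset α} {G : α → (Fin n → Bool) → ℝ} {r : ℝ}

theorem mono [DecidableEq α] (h : IsArgmaxRep f A B G r) {G' : α → (Fin n → Bool) → ℝ} {r' : ℝ}
    (hG : ∀ x, ∀ b ∈ A ∪ B, ∀ c ∈ A ∪ B, G c x + r < G b x → G' c x + r' < G' b x) :
    IsArgmaxRep f A B G' r' := by
  intro x
  obtain ⟨htrue, hfalse⟩ := h x
  refine ⟨fun hx => ?_, fun hx => ?_⟩
  · obtain ⟨b, hb, hbc⟩ := htrue hx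
    exact ⟨b, hb, fun c hc =>
      hG x b (mem_union_left _ hb) c (mem_union_right _ hc) (hbc c hc)⟩
  · obtain ⟨b, hb, hbc⟩ := hfalse hx
    exact ⟨b, hb, fun c hc =>
      hG x b (mem_union_right _ hb) c (mem_union_left _ hc) (hbc c hc)⟩

theorem exists_pos_mul (h : IsArgmaxRep f A B G 0) (r : ℝ) :
    ∃ K > 0, IsArgmaxRep f A B (fun p x => K * G p x) r := by
  have hx : ∀ x, ∀ᶠ K in Filter.atTop,
      (f x = true → ∃ b ∈ A, ∀ c ∈ B, K * G c x + r < K * G b x) ∧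
        (f x = false → ∃ b ∈ B, ∀ c ∈ A, K * G c x + r < K * G b x) := fun x =>
    (Filter.eventually_imp_distrib_left.2 fun hx => eventually_exists_mul_add_lt (by simpa using (h x).1 hx) r).and
      (Filter.eventually_imp_distrib_left.2 fun hx => eventually_exists_mul_add_lt (by simpa using (h x).2 hx) r)
  exact ((Filter.eventually_gt_atTop 0).and (Filter.eventually_all.2 hx)).exists

end IsArgmaxRep

theorem exists_isSignRep12_of_sum {f : (Fin n → Bool) → Bool} (S : Finset α) (c : α → ℝ)
    (e : α → Fin n → ℕ)
    (h : ∀ x, f x = true ↔ 0 ≤ ∑ p ∈ S, c p * ∏ i, (if x i then (2 : ℝ) else 1) ^ e p i) :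
    ∃ (c' : Fin #S → ℝ) (e' : Fin #S → Fin n → ℕ), IsSignRep12 f c' e' := by
  refine ⟨fun j => c (S.equivFin.symm j), fun j => e (S.equivFin.symm j), fun x => ?_⟩
  rw [h x, Equiv.sum_comp S.equivFin.symm
    (fun p : S => c p * ∏ i, (if x i then (2 : ℝ) else 1) ^ e p i), ← Finset.sum_coe_sort S]

namespace IsArgmaxRep

variable [DecidableEq α] {f : (Fin n → Bool) → Bool} {A B : Finset α}

theorem exists_isSignRep12_of_nat (hAB : Disjoint A B) (e : α → Fin n → ℕ) (v : α → ℝ)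
    (h : IsArgmaxRep f A B (fun p => evalAffine (fun i => (e p i : ℝ)) (v p)) #(A ∪ B)) :
    ∃ (c : Fin #(A ∪ B) → ℝ) (e' : Fin #(A ∪ B) → Fin n → ℕ), IsSignRep12 f c e' := by
  refine exists_isSignRep12_of_sum (A ∪ B) (fun p => (if p ∈ A then 1 else -1) * 2 ^ v p) e
    fun x => ?_
  set w : α → ℝ := fun p => 2 ^ evalAffine (fun i => (e p i : ℝ)) (v p) x
  have hsum : ∑ p ∈ A ∪ B, (if p ∈ A then 1 else -1) * 2 ^ v p *
      ∏ i, (if x i then (2 : ℝ) else 1) ^ e p i = ∑ p ∈ A, w p - ∑ p ∈ B, w p := by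
    simp only [w, two_rpow_evalAffine, mul_assoc]
    rw [sum_union hAB, sub_eq_add_neg, ← sum_neg_distrib]
    congr 1
    · exact sum_congr rfl fun p hp => by rw [if_pos hp, one_mul]
    · exact sum_congr rfl fun p hp => by rw [if_neg (disjoint_right.1 hAB hp), neg_one_mul]
  have hw : ∀ p, 0 < w p := fun p => Real.rpow_pos_of_pos two_pos _
  rw [hsum]
  cases hx : f x
  · obtain ⟨b, hb, hbc⟩ := (h x).2 hx
    have := sum_lt_sum_of_card_mul_lt (fun p _ => hw p) hb fun c hc =>
      card_mul_two_rpow_lt (card_le_card subset_union_left) (hbc c hc)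
    simpa using this
  · obtain ⟨b, hb, hbc⟩ := (h x).1 hx
    have := sum_lt_sum_of_card_mul_lt (fun p _ => hw p) hb fun c hc =>
      card_mul_two_rpow_lt (card_le_card subset_union_right) (hbc c hc)
    simpa using this.le

theorem exists_isSignRep12 (hAB : Disjoint A B) (u : α → Fin n → ℝ) (v : α → ℝ)
    (h : IsArgmaxRep f A B (fun p => evalAffine (u p) (v p)) 0) :
    ∃ (c : Fin #(A ∪ B) → ℝ) (e : Fin #(A ∪ B) → Fin n → ℕ), IsSignRep12 f c e := by
  obtain ⟨t, ht⟩ := (((A ∪ B) ×ˢ (univ : Finset (Fin n))).image fun q => -u q.1 q.2).exists_le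
  have hut : ∀ p ∈ A ∪ B, ∀ i, 0 ≤ u p i + t := fun p hp i => by
    linarith [ht _ (mem_image_of_mem _ (mem_product.2 ⟨hp, mem_univ i⟩ : (p, i) ∈ _))]
  have hshift : IsArgmaxRep f A B (fun p => evalAffine (fun i => u p i + t) (v p)) 0 :=
    h.mono fun x _ _ _ _ hbc => by simp only [evalAffine_add_const]; linarith
  obtain ⟨K, hK, hscale⟩ := hshift.exists_pos_mul (n + #(A ∪ B))
  refine exists_isSignRep12_of_nat hAB (fun p i => ⌊K * (u p i + t)⌋₊) (fun p => K * v p)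
    (hscale.mono fun x b hb c hc hbc => ?_)
  have hb' := evalAffine_natFloor_bounds (hut b hb) hK.le (v b) x
  have hc' := evalAffine_natFloor_bounds (hut c hc) hK.le (v c) x
  linarith

end IsArgmaxRep

theorem IsNNRep.isArgmaxRep {f : (Fin n → Bool) → Bool} {P N : Finset (EuclideanSpace ℝ (Fin n))}
    (h : IsNNRep f P N) :
    IsArgmaxRep f P N (fun p => evalAffine (fun i => 2 * p i) (-‖p‖ ^ 2)) 0 :=
  h.isArgmaxRep_neg_dist.mono fun x b _ c _ hbc => by
    have := (dist_lt_dist_iff_inner (toPoint x) b c).1 (by linarith)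
    simp only [evalAffine_two_mul_eq_inner, add_zero] at this ⊢
    linarith

end

/-- If a Boolean function `f` on `n` variables has a nearest neighbor
representation with `m` prototypes, then `f` has a sign-representation over `{1, 2}`
having `m` terms. -/
theorem nn_rep_to_signrep (n m : ℕ) (f : (Fin n → Bool) → Bool)
    (P N : Finset (EuclideanSpace ℝ (Fin n)))
    (hrep : IsNNRep f P N) (hm : (P ∪ N).card = m) :
    ∃ (c : Fin m → ℝ) (e : Fin m → Fin n → ℕ), IsSignRep12 f c e := by
  subst hm
  exact hrep.isArgmaxRep.exists_isSignRep12 hrep.1 _ _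
end
end

section
/- The nearest neighbor complexity of the mod 2 inner product function on 2n variables satisfies NN(IPₙ) ≥ 2^{n/2}. -/
open Finset

noncomputable section

/-- The mod 2 inner product function
`IPₙ(x₁,…,xₙ,y₁,…,yₙ) = (x₁ ∧ y₁) ⊕ ⋯ ⊕ (xₙ ∧ yₙ)` on `2n` variables. -/
def IP (n : ℕ) (x : Fin (2 * n) → Bool) : Bool :=
  decide (Odd ((Finset.univ.filter (fun i : Fin n =>
    x ⟨i.val, by have := i.isLt; omega⟩ = true ∧
    x ⟨n + i.val, by have := i.isLt; omega⟩ = true)).card))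

/-!
Expanding `‖z - w‖²` shows that in a nearest neighbor representation of `IPₙ` with `m`
prototypes, the value at the input `(x, y)` is the label of the prototype `w` maximising a score
`A w x + B w y` that is separable in the two halves of the input. For large `β`, the signed sum
`∑ w, ±exp (β (A w x + B w y))` of `m` positive rank-one matrices then has the sign pattern of
the Hadamard matrix `(-1)^⟨x, y⟩`, with a margin close to its largest term. After Forster's
rescaling of the rank-one terms to unit columns and balanced norms (found by minimising a
log-partition potential), comparing the correlation with the Hadamard matrix, whose operator norm
is `2^(n/2)`, against Cauchy–Schwarz gives `2ⁿ ≤ 2^(n/2) m`.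
-/

namespace NNIP

open Real Filter Topology

section SignMatrix

variable {X Y : Type*} [Fintype X] [Fintype Y]

def boolSign (b : Bool) : ℝ := if b then 1 else -1

lemma boolSign_mul_boolSign (a b : Bool) :
    boolSign a * boolSign b = if a = b then 1 else -1 := by
  cases a <;> cases b <;> norm_num [boolSign]

lemma boolSign_sq (b : Bool) : boolSign b ^ 2 = 1 := by
  cases b <;> norm_num [boolSign]

def BilinearBound (H : X → Y → ℝ) (K : ℝ) : Prop :=
  ∀ (u : X → ℝ) (v : Y → ℝ), ∑ x, ∑ y, H x y * u x * v y ≤ K * √(∑ x, u x ^ 2) * √(∑ y, v y ^ 2)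

theorem bilinearBound_of_orthogonal [DecidableEq X] {H : X → Y → ℝ} {k : ℝ}
    (hH : ∀ x x', ∑ y, H x y * H x' y = if x = x' then k else 0) : BilinearBound H √k := by
  intro u v
  have hcol : ∑ y, (∑ x, H x y * u x) ^ 2 = k * ∑ x, u x ^ 2 := by
    simp_rw [sq, Finset.sum_mul_sum, Finset.sum_comm (γ := Y)]
    simp_rw [show ∀ x x' y, H x y * u x * (H x' y * u x') = u x * u x' * (H x y * H x' y)
      from fun _ _ _ => by ring, ← Finset.mul_sum, hH]
    simp [Finset.mul_sum, mul_comm]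
  calc ∑ x, ∑ y, H x y * u x * v y = ∑ y, (∑ x, H x y * u x) * v y := by
        rw [Finset.sum_comm]; simp_rw [Finset.sum_mul]
    _ ≤ √(∑ y, (∑ x, H x y * u x) ^ 2) * √(∑ y, v y ^ 2) :=
        Real.sum_mul_le_sqrt_mul_sqrt _ _ _
    _ = √k * √(∑ x, u x ^ 2) * √(∑ y, v y ^ 2) := by
        rw [hcol, Real.sqrt_mul' _ (Finset.sum_nonneg fun _ _ => sq_nonneg _)]

end SignMatrix

section LogSumExp

variable {W : Type*} [Fintype W]

def logSumExp (f : W → ℝ) : ℝ := log (∑ w, exp (f w))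

def softmax (f : W → ℝ) (w : W) : ℝ := exp (f w) / ∑ w', exp (f w')

lemma softmax_mul_softmax (f g : W → ℝ) (w : W) :
    softmax f w * softmax g w = exp (f w + g w) / ((∑ w, exp (f w)) * ∑ w, exp (g w)) := by
  rw [softmax, softmax, div_mul_div_comm, exp_add]

variable [Nonempty W]

lemma sum_exp_pos (f : W → ℝ) : 0 < ∑ w, exp (f w) :=
  Finset.sum_pos (fun _ _ => exp_pos _) Finset.univ_nonempty

lemma softmax_pos (f : W → ℝ) (w : W) : 0 < softmax f w :=
  div_pos (exp_pos _) (sum_exp_pos f)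

lemma sum_softmax (f : W → ℝ) : ∑ w, softmax f w = 1 := by
  simp_rw [softmax]
  rw [← Finset.sum_div, div_self (sum_exp_pos f).ne']

lemma le_logSumExp (f : W → ℝ) (w : W) : f w ≤ logSumExp f := by
  rw [logSumExp, le_log_iff_exp_le (sum_exp_pos f)]
  exact Finset.single_le_sum (f := fun w => exp (f w)) (fun _ _ => (exp_pos _).le)
    (Finset.mem_univ w)

lemma logSumExp_add_const (f : W → ℝ) (c : ℝ) :
    logSumExp (fun w => f w + c) = logSumExp f + c := by
  simp_rw [logSumExp, exp_add, ← Finset.sum_mul]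
  rw [log_mul (sum_exp_pos f).ne' (exp_pos c).ne', log_exp]

lemma logSumExp_add_single_sub_le [DecidableEq W] (f : W → ℝ) (w : W) (t : ℝ) :
    logSumExp (f + Pi.single w t) - logSumExp f ≤ softmax f w * (exp t - 1) := by
  have hsum : ∑ v, exp ((f + Pi.single w t : W → ℝ) v)
      = ∑ v, exp (f v) + exp (f w) * (exp t - 1) := by
    rw [← Finset.add_sum_erase _ _ (Finset.mem_univ w),
      ← Finset.add_sum_erase _ (fun v => exp (f v)) (Finset.mem_univ w)]
    have hrest : ∀ v ∈ Finset.univ.erase w, exp ((f + Pi.single w t : W → ℝ) v) = exp (f v) :=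
      fun v hv => by simp [Finset.ne_of_mem_erase hv]
    rw [Finset.sum_congr rfl hrest]
    simp only [Pi.add_apply, Pi.single_eq_same, exp_add]
    ring
  have hpos := sum_exp_pos f
  have hpos' : 0 < ∑ v, exp (f v) + exp (f w) * (exp t - 1) := hsum ▸ sum_exp_pos _
  rw [logSumExp, logSumExp, hsum, ← log_div hpos'.ne' hpos.ne']
  calc log ((∑ v, exp (f v) + exp (f w) * (exp t - 1)) / ∑ v, exp (f v))
      ≤ (∑ v, exp (f v) + exp (f w) * (exp t - 1)) / ∑ v, exp (f v) - 1 :=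
        log_le_sub_one_of_pos (div_pos hpos' hpos)
    _ = softmax f w * (exp t - 1) := by
        rw [softmax]; field_simp; ring

lemma continuous_logSumExp : Continuous (logSumExp : (W → ℝ) → ℝ) :=
  (continuous_finsetSum _ fun w _ => continuous_exp.comp (continuous_apply w)).log
    fun f => (sum_exp_pos f).ne'

end LogSumExp

section Balancing

variable {W X : Type*} [Fintype W] [Fintype X]

def logPartition (F : W → X → ℝ) (s : W → ℝ) : ℝ := ∑ x, logSumExp fun w => F w x + s w

def mass (F : W → X → ℝ) (s : W → ℝ) (w : W) : ℝ := ∑ x, softmax (fun w => F w x + s w) w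

def balancePotential (F G : W → X → ℝ) (s : W → ℝ) : ℝ := logPartition F s + logPartition G (-s)

/-- Forster's normalisation of the positive rank-one matrices `exp (A w x + B w y)`. As
`scale x y` does not depend on `w`, the terms `φ w x * ψ w y` at a fixed entry keep the order
and the ratios of the `exp (A w x + B w y)`. -/
structure BalancedFactorization (A B : W → X → ℝ) where
  φ : W → X → ℝ
  ψ : W → X → ℝ
  scale : X → X → ℝ
  φ_nonneg : ∀ w x, 0 ≤ φ w x
  ψ_nonneg : ∀ w y, 0 ≤ ψ w y
  sum_φ_sq : ∀ x, ∑ w, φ w x ^ 2 = 1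
  sum_ψ_sq : ∀ y, ∑ w, ψ w y ^ 2 = 1
  balanced : ∀ w, ∑ x, φ w x ^ 2 = ∑ y, ψ w y ^ 2
  scale_pos : ∀ x y, 0 < scale x y
  φ_mul_ψ : ∀ w x y, φ w x * ψ w y = scale x y * exp (A w x + B w y)

variable [Nonempty W]

lemma mass_pos [Nonempty X] (F : W → X → ℝ) (s : W → ℝ) (w : W) : 0 < mass F s w :=
  Finset.sum_pos (fun _ _ => softmax_pos _ _) Finset.univ_nonempty

lemma logPartition_add_const (F : W → X → ℝ) (s : W → ℝ) (c : ℝ) :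
    logPartition F (fun w => s w + c) = logPartition F s + Fintype.card X * c := by
  simp_rw [logPartition, ← add_assoc, logSumExp_add_const, Finset.sum_add_distrib]
  simp

lemma sum_add_card_mul_le_logPartition (F : W → X → ℝ) (s : W → ℝ) (w : W) :
    ∑ x, F w x + Fintype.card X * s w ≤ logPartition F s := by
  calc ∑ x, F w x + Fintype.card X * s w = ∑ x, (F w x + s w) := by
        simp [Finset.sum_add_distrib]
    _ ≤ logPartition F s := Finset.sum_le_sum fun x _ => le_logSumExp (fun w => F w x + s w) w

lemma logPartition_add_single_sub_le [DecidableEq W] (F : W → X → ℝ) (s : W → ℝ) (w : W)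
    (t : ℝ) : logPartition F (s + Pi.single w t) - logPartition F s ≤ mass F s w * (exp t - 1) := by
  rw [logPartition, logPartition, mass, Finset.sum_mul, ← Finset.sum_sub_distrib]
  refine Finset.sum_le_sum fun x _ => ?_
  have hshift : (fun v => F v x + (s + Pi.single w t : W → ℝ) v)
      = (fun v => F v x + s v) + Pi.single w t := by
    ext v; simp only [Pi.add_apply]; ring
  rw [hshift]
  exact logSumExp_add_single_sub_le _ w t

lemma continuous_logPartition (F : W → X → ℝ) : Continuous (logPartition F) :=
  continuous_finsetSum _ fun x _ => continuous_logSumExp.comp (by fun_prop)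

lemma balancePotential_add_const (F G : W → X → ℝ) (s : W → ℝ) (c : ℝ) :
    balancePotential F G (fun w => s w + c) = balancePotential F G s := by
  have hneg : (-fun w => s w + c) = fun w => (-s) w + -c := by ext; simp; ring
  rw [balancePotential, balancePotential, hneg, logPartition_add_const, logPartition_add_const]
  ring

lemma card_mul_sub_le_balancePotential (F G : W → X → ℝ) (s : W → ℝ) (w w' : W) :
    Fintype.card X * (s w - s w') ≤ balancePotential F G s - ∑ x, F w x - ∑ x, G w' x := by
  have hF := sum_add_card_mul_le_logPartition F s w
  have hG := sum_add_card_mul_le_logPartition G (-s) w'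
  simp only [Pi.neg_apply] at hG
  rw [balancePotential]
  linarith

/- The potential is invariant under adding a constant to `s` and bounds every difference
`s w - s w'` on its sublevel sets, so a minimiser on a box is a global one. -/
lemma exists_forall_balancePotential_le [Nonempty X] (F G : W → X → ℝ) :
    ∃ s₀, ∀ s, balancePotential F G s₀ ≤ balancePotential F G s := by
  obtain ⟨w₀⟩ := ‹Nonempty W›
  have hX : (0 : ℝ) < Fintype.card X := by exact_mod_cast Fintype.card_pos
  set Φ := balancePotential F G
  set D : W → W → ℝ := fun w w' => (Φ 0 - ∑ x, F w x - ∑ x, G w' x) / Fintype.card X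
  have hdiff : ∀ s, Φ s ≤ Φ 0 → ∀ w w', s w - s w' ≤ D w w' := fun s hs w w' => by
    rw [le_div_iff₀' hX]
    linarith [card_mul_sub_le_balancePotential F G s w w']
  set B : Set (W → ℝ) := Set.univ.pi fun w => Set.Icc (-D w₀ w) (D w w₀)
  have h0B : (0 : W → ℝ) ∈ B := fun w _ => by
    simpa [neg_le, and_comm] using And.intro (hdiff 0 le_rfl w₀ w) (hdiff 0 le_rfl w w₀)
  obtain ⟨s₀, hs₀B, hs₀⟩ := (isCompact_univ_pi fun w => isCompact_Icc).exists_isMinOn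
    ⟨0, h0B⟩ (continuous_logPartition F |>.add
      ((continuous_logPartition G).comp continuous_neg)).continuousOn
  refine ⟨s₀, fun s => ?_⟩
  by_cases hs : Φ s ≤ Φ 0
  · have hshift : (fun w => s w + -s w₀) ∈ B := fun w _ =>
      ⟨by linarith [hdiff s hs w₀ w], by linarith [hdiff s hs w w₀]⟩
    calc Φ s₀ ≤ Φ (fun w => s w + -s w₀) := hs₀ hshift
      _ = Φ s := balancePotential_add_const F G s _
  · exact (hs₀ h0B).trans (not_le.1 hs).le

lemma eq_of_forall_mul_exp_sub_one_nonneg {a b : ℝ} (ha : 0 < a) (hb : 0 < b)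
    (h : ∀ t, 0 ≤ a * (exp t - 1) + b * (exp (-t) - 1)) : a = b := by
  have hu : 0 < (a + b) / (2 * a) := by positivity
  have := h (log ((a + b) / (2 * a)))
  rw [exp_neg, exp_log hu] at this
  have hkey : a * ((a + b) / (2 * a) - 1) + b * (((a + b) / (2 * a))⁻¹ - 1)
      = -(a - b) ^ 2 / (2 * (a + b)) := by
    field_simp; ring
  rw [hkey, le_div_iff₀ (by positivity)] at this
  nlinarith [sq_nonneg (a - b)]

/- `mass F s w - mass G (-s) w` is the derivative of the potential along `Pi.single w 1`;
`log y ≤ y - 1` gives the vanishing of this derivative at a minimiser without differentiating. -/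
theorem exists_mass_eq [Nonempty X] (F G : W → X → ℝ) :
    ∃ s, ∀ w, mass F s w = mass G (-s) w := by
  classical
  obtain ⟨s, hs⟩ := exists_forall_balancePotential_le F G
  refine ⟨s, fun w => eq_of_forall_mul_exp_sub_one_nonneg (mass_pos F s w) (mass_pos G _ w)
    fun t => ?_⟩
  have hF := logPartition_add_single_sub_le F s w t
  have hG := logPartition_add_single_sub_le G (-s) w (-t)
  rw [Pi.single_neg, ← neg_add] at hG
  have := hs (s + Pi.single w t)
  rw [balancePotential, balancePotential] at this
  linarith

theorem BalancedFactorization.nonempty [Nonempty X] (A B : W → X → ℝ) :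
    Nonempty (BalancedFactorization A B) := by
  obtain ⟨s, hs⟩ := exists_mass_eq (fun w x => 2 * A w x) (fun w x => 2 * B w x)
  set f : X → W → ℝ := fun x w => 2 * A w x + s w
  set g : X → W → ℝ := fun y w => 2 * B w y + (-s) w
  have hsq (h : W → ℝ) (w : W) : √(softmax h w) ^ 2 = softmax h w :=
    sq_sqrt (softmax_pos h w).le
  refine ⟨⟨fun w x => √(softmax (f x) w), fun w y => √(softmax (g y) w),
    fun x y => (√((∑ w, exp (f x w)) * ∑ w, exp (g y w)))⁻¹,
    fun _ _ => sqrt_nonneg _, fun _ _ => sqrt_nonneg _,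
    fun x => by simp only [hsq, sum_softmax], fun y => by simp only [hsq, sum_softmax],
    fun w => by simpa only [hsq, mass] using hs w,
    fun x y => inv_pos.2 (sqrt_pos.2 (mul_pos (sum_exp_pos _) (sum_exp_pos _))), ?_⟩⟩
  intro w x y
  have hexp : exp (f x w + g y w) = exp (A w x + B w y) ^ 2 := by
    rw [← exp_nat_mul]; simp only [f, g, Pi.neg_apply]; ring_nf
  rw [← sqrt_mul (softmax_pos _ w).le, softmax_mul_softmax, hexp,
    sqrt_div' _ (mul_pos (sum_exp_pos _) (sum_exp_pos _)).le, sqrt_sq (exp_pos _).le,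
    div_eq_inv_mul]

end Balancing

section Forster

variable {W X : Type*} [Fintype W] [Fintype X]

lemma one_sub_mul_le_sum_ite_mul {t : W → ℝ} (ht : ∀ w, 0 ≤ t w) (ℓ : W → Bool) (v : Bool)
    {θ : ℝ} (hθ : 0 ≤ θ) {b : W} (hb : ℓ b = v) (hopp : ∀ c, ℓ c ≠ v → t c ≤ θ * t b) :
    (1 - Fintype.card W * θ) * t b ≤ ∑ w, (if ℓ w = v then 1 else -1) * t w := by
  have hsplit : ∑ w, (if ℓ w = v then 1 else -1) * t w
      = ∑ w, (if ℓ w = v then t w else 0) - ∑ w, (if ℓ w = v then 0 else t w) := by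
    rw [← Finset.sum_sub_distrib]
    exact Finset.sum_congr rfl fun w _ => by split_ifs <;> ring
  have hsame : t b ≤ ∑ w, (if ℓ w = v then t w else 0) := by
    simpa [hb] using Finset.single_le_sum (f := fun w => if ℓ w = v then t w else 0)
      (fun w _ => by split_ifs <;> simp [ht]) (Finset.mem_univ b)
  have hother : ∑ w, (if ℓ w = v then 0 else t w) ≤ Fintype.card W * θ * t b := by
    calc ∑ w, (if ℓ w = v then 0 else t w) ≤ ∑ _w : W, θ * t b :=
          Finset.sum_le_sum fun w _ => by
            split_ifs with h
            · exact mul_nonneg hθ (ht b)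
            · exact hopp w h
      _ = Fintype.card W * θ * t b := by simp [mul_assoc]
  rw [hsplit]
  linarith

lemma sum_mul_sq_le_of_isMax {φ ψ : W → ℝ} (hφ : ∀ w, 0 ≤ φ w) (hψ : ∀ w, 0 ≤ ψ w)
    (hφ1 : ∑ w, φ w ^ 2 = 1) (hψ1 : ∑ w, ψ w ^ 2 = 1) {b : W}
    (hb : ∀ w, φ w * ψ w ≤ φ b * ψ b) :
    ∑ w, (φ w * ψ w) ^ 2 ≤ φ b * ψ b := by
  have hcs : ∑ w, φ w * ψ w ≤ 1 := by
    simpa [hφ1, hψ1] using Real.sum_mul_le_sqrt_mul_sqrt Finset.univ φ ψ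
  calc ∑ w, (φ w * ψ w) ^ 2 ≤ ∑ w, φ b * ψ b * (φ w * ψ w) :=
        Finset.sum_le_sum fun w _ => by
          rw [sq]; exact mul_le_mul_of_nonneg_right (hb w) (mul_nonneg (hφ w) (hψ w))
    _ = φ b * ψ b * ∑ w, φ w * ψ w := by rw [Finset.mul_sum]
    _ ≤ φ b * ψ b := mul_le_of_le_one_right (mul_nonneg (hφ b) (hψ b)) hcs

lemma one_sub_mul_sum_sq_le_sum_boolSign_mul {φ ψ : W → ℝ} (hφ : ∀ w, 0 ≤ φ w)
    (hψ : ∀ w, 0 ≤ ψ w) (hφ1 : ∑ w, φ w ^ 2 = 1) (hψ1 : ∑ w, ψ w ^ 2 = 1) (ℓ : W → Bool)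
    (v : Bool) {θ : ℝ} (hθ : 0 ≤ θ) (hmθ : Fintype.card W * θ ≤ 1) {b : W}
    (hmax : ∀ w, φ w * ψ w ≤ φ b * ψ b) (hb : ℓ b = v)
    (hopp : ∀ c, ℓ c ≠ v → φ c * ψ c ≤ θ * (φ b * ψ b)) :
    (1 - Fintype.card W * θ) * ∑ w, (φ w * ψ w) ^ 2
      ≤ ∑ w, boolSign v * (boolSign (ℓ w) * φ w) * ψ w :=
  calc (1 - Fintype.card W * θ) * ∑ w, (φ w * ψ w) ^ 2
      ≤ (1 - Fintype.card W * θ) * (φ b * ψ b) :=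
        mul_le_mul_of_nonneg_left (sum_mul_sq_le_of_isMax hφ hψ hφ1 hψ1 hmax) (by linarith)
    _ ≤ _ := one_sub_mul_le_sum_ite_mul (fun w => mul_nonneg (hφ w) (hψ w)) ℓ v hθ hb hopp
    _ = _ := Finset.sum_congr rfl fun w _ => by rw [← boolSign_mul_boolSign]; ring

theorem card_le_of_balanced [Nonempty X] {φ ψ : W → X → ℝ}
    (hφ : ∀ w x, 0 ≤ φ w x) (hψ : ∀ w y, 0 ≤ ψ w y)
    (hφ1 : ∀ x, ∑ w, φ w x ^ 2 = 1) (hψ1 : ∀ y, ∑ w, ψ w y ^ 2 = 1)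
    (hbal : ∀ w, ∑ x, φ w x ^ 2 = ∑ y, ψ w y ^ 2)
    (f : X → X → Bool) (ℓ : W → Bool) {K : ℝ}
    (hK : BilinearBound (fun x y => boolSign (f x y)) K)
    {θ : ℝ} (hθ : 0 ≤ θ) (hmθ : Fintype.card W * θ ≤ 1)
    (hmargin : ∀ x y, ∃ b, (∀ w, φ w x * ψ w y ≤ φ b x * ψ b y) ∧ ℓ b = f x y ∧
      ∀ c, ℓ c ≠ f x y → φ c x * ψ c y ≤ θ * (φ b x * ψ b y)) :
    (1 - Fintype.card W * θ) * Fintype.card X ≤ K * Fintype.card W := by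
  obtain ⟨a, ha⟩ : ∃ a : W → ℝ, ∀ w, a w = ∑ x, φ w x ^ 2 := ⟨_, fun _ => rfl⟩
  have hsum_a : ∑ w, a w = Fintype.card X := by
    simp_rw [ha]; rw [Finset.sum_comm]; simp [hφ1]
  have hpoint : ∀ x y, (1 - Fintype.card W * θ) * ∑ w, (φ w x * ψ w y) ^ 2
      ≤ ∑ w, boolSign (f x y) * (boolSign (ℓ w) * φ w x) * ψ w y := fun x y => by
    obtain ⟨b, hmax, hb, hopp⟩ := hmargin x y
    exact one_sub_mul_sum_sq_le_sum_boolSign_mul (hφ · x) (hψ · y) (hφ1 x) (hψ1 y) ℓ (f x y)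
      hθ hmθ hmax hb hopp
  have hcomm (g : X → X → W → ℝ) : ∑ x, ∑ y, ∑ w, g x y w = ∑ w, ∑ x, ∑ y, g x y w :=
    (Finset.sum_congr rfl fun _ _ => Finset.sum_comm).trans Finset.sum_comm
  have hlhs : ∑ x, ∑ y, ∑ w, (φ w x * ψ w y) ^ 2 = ∑ w, a w ^ 2 := by
    rw [hcomm]
    refine Finset.sum_congr rfl fun w _ => ?_
    simp_rw [mul_pow]
    rw [← Finset.sum_mul_sum, ← hbal, ha, sq]
  have hrhs : ∑ x, ∑ y, ∑ w, boolSign (f x y) * (boolSign (ℓ w) * φ w x) * ψ w y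
      ≤ K * Fintype.card X := by
    rw [← hsum_a, Finset.mul_sum, hcomm]
    refine Finset.sum_le_sum fun w _ => ?_
    have hnorm : ∑ x, (boolSign (ℓ w) * φ w x) ^ 2 = a w := by simp [mul_pow, boolSign_sq, ha]
    have := hK (fun x => boolSign (ℓ w) * φ w x) (ψ w)
    rwa [hnorm, ← hbal, ← ha, mul_assoc,
      Real.mul_self_sqrt ((ha w).symm ▸ Finset.sum_nonneg fun _ _ => sq_nonneg _)] at this
  have hsum : (1 - Fintype.card W * θ) * ∑ w, a w ^ 2 ≤ K * Fintype.card X := by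
    rw [← hlhs, Finset.mul_sum]
    simp_rw [Finset.mul_sum]
    exact (Finset.sum_le_sum fun x _ => Finset.sum_le_sum fun y _ => by
      simpa only [Finset.mul_sum] using hpoint x y).trans hrhs
  have hcs : (Fintype.card X : ℝ) ^ 2 ≤ Fintype.card W * ∑ w, a w ^ 2 := by
    simpa [hsum_a] using sq_sum_le_card_mul_sum_sq (s := Finset.univ) (f := a)
  have hX : (0 : ℝ) < Fintype.card X := by exact_mod_cast Fintype.card_pos
  have h1 : 0 ≤ 1 - Fintype.card W * θ := by linarith
  nlinarith [mul_le_mul_of_nonneg_left hcs h1]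

variable [Nonempty X]

theorem card_le_of_exp_margin [Nonempty W] (A B : W → X → ℝ) (f : X → X → Bool)
    (ℓ : W → Bool) {K : ℝ}
    (hK : BilinearBound (fun x y => boolSign (f x y)) K)
    {θ : ℝ} (hθ : 0 ≤ θ) (hmθ : Fintype.card W * θ ≤ 1)
    (hmargin : ∀ x y, ∃ b, (∀ w, A w x + B w y ≤ A b x + B b y) ∧ ℓ b = f x y ∧
      ∀ c, ℓ c ≠ f x y → exp (A c x + B c y) ≤ θ * exp (A b x + B b y)) :
    (1 - Fintype.card W * θ) * Fintype.card X ≤ K * Fintype.card W := by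
  obtain ⟨Φ⟩ := BalancedFactorization.nonempty A B
  refine card_le_of_balanced Φ.φ_nonneg Φ.ψ_nonneg Φ.sum_φ_sq Φ.sum_ψ_sq Φ.balanced f ℓ hK hθ
    hmθ fun x y => ?_
  obtain ⟨b, hmax, hb, hopp⟩ := hmargin x y
  refine ⟨b, fun w => ?_, hb, fun c hc => ?_⟩
  · rw [Φ.φ_mul_ψ, Φ.φ_mul_ψ]
    exact mul_le_mul_of_nonneg_left (exp_le_exp.2 (hmax w)) (Φ.scale_pos x y).le
  · rw [Φ.φ_mul_ψ, Φ.φ_mul_ψ, mul_left_comm]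
    exact mul_le_mul_of_nonneg_left (hopp c hc) (Φ.scale_pos x y).le

omit [Fintype X] [Nonempty X] in
lemma exists_isMax_and_label_eq {A B : W → X → ℝ} {f : X → X → Bool} {ℓ : W → Bool} {x y : X}
    (h : ∃ b, ℓ b = f x y ∧ ∀ c, ℓ c ≠ f x y → A c x + B c y < A b x + B b y) :
    ∃ b, (∀ w, A w x + B w y ≤ A b x + B b y) ∧ ℓ b = f x y ∧
      ∀ c, ℓ c ≠ f x y → A c x + B c y < A b x + B b y := by
  obtain ⟨b', -, hlt⟩ := h
  have : Nonempty W := ⟨b'⟩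
  obtain ⟨b, -, hb⟩ := Finset.exists_max_image Finset.univ (fun w => A w x + B w y)
    Finset.univ_nonempty
  have hℓb : ℓ b = f x y := by
    by_contra hne
    exact (hlt b hne).not_ge (hb b' (Finset.mem_univ _))
  exact ⟨b, fun w => hb w (Finset.mem_univ _), hℓb,
    fun c hc => (hlt c hc).trans_le (hb b' (Finset.mem_univ _))⟩

lemma eventually_exp_mul_le_mul_exp_mul {a b θ : ℝ} (hab : a < b) (hθ : 0 < θ) :
    ∀ᶠ β in atTop, exp (β * a) ≤ θ * exp (β * b) := by
  have hlim := tendsto_exp_atBot.comp (tendsto_id.atTop_mul_const_of_neg (sub_neg.2 hab))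
  filter_upwards [(tendsto_order.1 hlim).2 θ hθ] with β hβ
  calc exp (β * a) = exp (β * (a - b)) * exp (β * b) := by rw [← exp_add]; ring_nf
    _ ≤ θ * exp (β * b) := mul_le_mul_of_nonneg_right hβ.le (exp_pos _).le

theorem one_sub_mul_card_le_of_forall_exists_lt [Nonempty W] (A B : W → X → ℝ)
    (f : X → X → Bool) (ℓ : W → Bool) {K : ℝ} (hK : BilinearBound (fun x y => boolSign (f x y)) K)
    (hrep : ∀ x y, ∃ b, ℓ b = f x y ∧ ∀ c, ℓ c ≠ f x y → A c x + B c y < A b x + B b y)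
    {η : ℝ} (hη0 : 0 < η) (hη1 : η ≤ 1) :
    (1 - η) * Fintype.card X ≤ K * Fintype.card W := by
  have hW : (0 : ℝ) < Fintype.card W := by exact_mod_cast Fintype.card_pos
  choose b hbmax hbℓ hblt using fun x y => exists_isMax_and_label_eq (hrep x y)
  set θ := η / Fintype.card W
  have hθ : 0 < θ := div_pos hη0 hW
  obtain ⟨β, hβ0, hβ⟩ := ((eventually_ge_atTop 0).and
    (eventually_all.2 fun x => eventually_all.2 fun y => eventually_all.2 fun c =>
      eventually_imp_distrib_left.2 fun hc =>
        eventually_exp_mul_le_mul_exp_mul (hblt x y c hc) hθ)).exists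
  have hmargin : ∀ x y, ∃ b, (∀ w, β * A w x + β * B w y ≤ β * A b x + β * B b y) ∧
      ℓ b = f x y ∧ ∀ c, ℓ c ≠ f x y →
        exp (β * A c x + β * B c y) ≤ θ * exp (β * A b x + β * B b y) := fun x y =>
    ⟨b x y, fun w => by simpa only [mul_add] using mul_le_mul_of_nonneg_left (hbmax x y w) hβ0,
      hbℓ x y, fun c hc => by simpa only [mul_add] using hβ x y c hc⟩
  have := card_le_of_exp_margin (fun w x => β * A w x) (fun w y => β * B w y) f ℓ hK hθ.le
    (by rwa [mul_div_cancel₀ _ hW.ne']) hmargin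
  rwa [mul_div_cancel₀ _ hW.ne'] at this

theorem card_le_of_forall_exists_lt (A B : W → X → ℝ) (f : X → X → Bool) (ℓ : W → Bool)
    {K : ℝ} (hK : BilinearBound (fun x y => boolSign (f x y)) K)
    (hrep : ∀ x y, ∃ b, ℓ b = f x y ∧ ∀ c, ℓ c ≠ f x y → A c x + B c y < A b x + B b y) :
    (Fintype.card X : ℝ) ≤ K * Fintype.card W := by
  obtain ⟨x₀⟩ := ‹Nonempty X›
  have : Nonempty W := ⟨(hrep x₀ x₀).choose⟩
  have hlim : Tendsto (fun η : ℝ => (1 - η) * Fintype.card X) (𝓝[>] 0) (𝓝 (Fintype.card X)) := by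
    have : Continuous fun η : ℝ => (1 - η) * Fintype.card X := by fun_prop
    simpa using (this.tendsto 0).mono_left nhdsWithin_le_nhds
  exact le_of_tendsto hlim <| eventually_of_mem (Ioo_mem_nhdsGT one_pos) fun η hη =>
    one_sub_mul_card_le_of_forall_exists_lt A B f ℓ hK hrep hη.1 hη.2.le

end Forster

lemma dist_lt_dist_iff_two_inner_sub {E : Type*} [NormedAddCommGroup E] [InnerProductSpace ℝ E]
    (z b c : E) :
    dist z b < dist z c ↔ 2 * inner ℝ z c - ‖c‖ ^ 2 < 2 * inner ℝ z b - ‖b‖ ^ 2 := by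
  rw [← pow_lt_pow_iff_left₀ dist_nonneg dist_nonneg two_ne_zero, dist_eq_norm, dist_eq_norm,
    norm_sub_sq_real, norm_sub_sq_real]
  constructor <;> intro h <;> linarith

lemma toPoint_injective {d : ℕ} : Function.Injective (toPoint (n := d)) := fun a b h =>
  funext fun i => by
    have hi : boolToR (a i) = boolToR (b i) := congrArg (fun p : EuclideanSpace ℝ (Fin d) => p i) h
    revert hi
    cases a i <;> cases b i <;> simp [boolToR]

lemma isNNRep_image_toPoint {d : ℕ} (f : (Fin d → Bool) → Bool) :
    IsNNRep f (({a | f a = true} : Finset _).image toPoint)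
      (({a | f a = false} : Finset _).image toPoint) := by
  have hclass (a : Fin d → Bool) (v : Bool) (ha : f a = v) :
      ∃ b ∈ ({a | f a = v} : Finset _).image toPoint,
        ∀ c ∈ ({a | f a = !v} : Finset _).image toPoint,
          dist (toPoint a) b < dist (toPoint a) c := by
    refine ⟨toPoint a, Finset.mem_image_of_mem _ (by simpa using ha), fun c hc => ?_⟩
    obtain ⟨a', ha', rfl⟩ := Finset.mem_image.1 hc
    rw [dist_self, dist_pos]
    refine toPoint_injective.ne fun h => ?_
    simp_all
  refine ⟨Finset.disjoint_left.2 fun p hp hp' => ?_, fun a =>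
    ⟨fun ha => hclass a true ha, fun ha => hclass a false ha⟩⟩
  obtain ⟨a, ha, rfl⟩ := Finset.mem_image.1 hp
  obtain ⟨a', ha', he⟩ := Finset.mem_image.1 hp'
  simp_all [toPoint_injective he]

lemma exists_isNNRep_card_eq_NN {d : ℕ} (f : (Fin d → Bool) → Bool) :
    ∃ P N, IsNNRep f P N ∧ (P ∪ N).card = NN f :=
  Nat.sInf_mem (s := {m | ∃ P N, IsNNRep f P N ∧ (P ∪ N).card = m})
    ⟨_, _, _, isNNRep_image_toPoint f, rfl⟩

lemma IsNNRep.exists_label_eq {d : ℕ} {f : (Fin d → Bool) → Bool} {P N : Finset _}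
    (hrep : IsNNRep f P N) (a : Fin d → Bool) :
    ∃ b ∈ P ∪ N, decide (b ∈ P) = f a ∧
      ∀ c ∈ P ∪ N, decide (c ∈ P) ≠ f a → dist (toPoint a) b < dist (toPoint a) c := by
  cases ha : f a
  · obtain ⟨b, hbN, hb⟩ := (hrep.2 a).2 ha
    refine ⟨b, Finset.mem_union_right _ hbN, by simpa using Finset.disjoint_right.1 hrep.1 hbN,
      fun c _ hc => hb c (by simpa using hc)⟩
  · obtain ⟨b, hbP, hb⟩ := (hrep.2 a).1 ha
    refine ⟨b, Finset.mem_union_left _ hbP, by simpa using hbP, fun c hc hcP => ?_⟩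
    exact hb c ((Finset.mem_union.1 hc).resolve_left (by simpa using hcP))

section InnerProductMod2

variable {n : ℕ}

def join (x y : Fin n → Bool) : Fin (2 * n) → Bool :=
  fun j => if h : (j : ℕ) < n then x ⟨j, h⟩ else y ⟨j - n, by omega⟩

def ipChar (x y : Fin n → Bool) : ℝ := ∏ i, if x i && y i then -1 else 1

lemma boolSign_IP_join (x y : Fin n → Bool) :
    boolSign (IP n (join x y)) = -ipChar x y := by
  have hprod : ipChar x y = (-1) ^ #{i | x i = true ∧ y i = true} := by
    rw [ipChar, Finset.prod_ite, Finset.prod_const_one, mul_one, Finset.prod_const]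
    simp only [Bool.and_eq_true]
  have hjoin : IP n (join x y) = decide (Odd #{i | x i = true ∧ y i = true}) := by
    simp [IP, join]
  rw [hprod, hjoin]
  rcases Nat.even_or_odd #{i | x i = true ∧ y i = true} with h | h
  · simp [boolSign, h.neg_one_pow, Nat.not_odd_iff_even.2 h]
  · simp [boolSign, h.neg_one_pow, h]

lemma sum_ipChar_mul_ipChar (x x' : Fin n → Bool) :
    ∑ y, ipChar x y * ipChar x' y = if x = x' then 2 ^ n else 0 := by
  have hcoord (a a' : Bool) : ∑ b : Bool, (if a && b then (-1 : ℝ) else 1) *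
      (if a' && b then -1 else 1) = if a = a' then 2 else 0 := by
    cases a <;> cases a' <;> norm_num
  simp_rw [ipChar, ← Finset.prod_mul_distrib]
  rw [← Fintype.prod_sum fun i b =>
    (if x i && b then (-1 : ℝ) else 1) * if x' i && b then -1 else 1]
  simp_rw [hcoord, Fintype.prod_ite_zero, Finset.prod_const, Finset.card_univ,
    Fintype.card_fin, funext_iff]

lemma bilinearBound_boolSign_IP :
    BilinearBound (fun x y : Fin n → Bool => boolSign (IP n (join x y))) √(2 ^ n) :=
  bilinearBound_of_orthogonal (by simpa [boolSign_IP_join] using sum_ipChar_mul_ipChar)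

lemma toPoint_join (x y : Fin n → Bool) :
    toPoint (join x y) = toPoint (join x fun _ => false) + toPoint (join (fun _ => false) y) := by
  ext j
  rcases lt_or_ge (j : ℕ) n with hj | hj <;> simp [toPoint, join, boolToR, hj, not_lt.2]

theorem sqrt_two_pow_le_card_of_isNNRep {P N : Finset (EuclideanSpace ℝ (Fin (2 * n)))}
    (hrep : IsNNRep (IP n) P N) : √(2 ^ n) ≤ (P ∪ N).card := by
  -- with `z = toPoint (join x y)`, `dist z w ^ 2 = ‖z‖ ^ 2 - (A w x + B w y)`
  let A (w : ↥(P ∪ N)) (x : Fin n → Bool) : ℝ :=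
    2 * inner ℝ (toPoint (join x fun _ => false)) w.1 - ‖w.1‖ ^ 2
  let B (w : ↥(P ∪ N)) (y : Fin n → Bool) : ℝ :=
    2 * inner ℝ (toPoint (join (fun _ => false) y)) w.1
  have hsep : ∀ x y, ∃ b : ↥(P ∪ N), decide (b.1 ∈ P) = IP n (join x y) ∧
      ∀ c : ↥(P ∪ N), decide (c.1 ∈ P) ≠ IP n (join x y) → A c x + B c y < A b x + B b y := by
    intro x y
    obtain ⟨b, hb, hbP, hlt⟩ := IsNNRep.exists_label_eq hrep (join x y)
    refine ⟨⟨b, hb⟩, hbP, fun c hc => ?_⟩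
    have := (dist_lt_dist_iff_two_inner_sub _ _ _).1 (hlt c c.2 hc)
    rw [toPoint_join] at this
    simp only [A, B, inner_add_left] at this ⊢
    linarith
  have hcard := card_le_of_forall_exists_lt A B _ _ bilinearBound_boolSign_IP hsep
  simp only [Fintype.card_coe, Fintype.card_pi, Fintype.card_bool, Finset.prod_const,
    Finset.card_univ, Fintype.card_fin, Nat.cast_pow, Nat.cast_ofNat] at hcard
  have hpos : 0 < √((2 : ℝ) ^ n) := sqrt_pos.2 (by positivity)
  nlinarith [mul_self_sqrt (by positivity : (0 : ℝ) ≤ 2 ^ n)]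

end InnerProductMod2

end NNIP

/-- The nearest neighbor complexity of the mod 2 inner product
function on `2n` variables satisfies `NN(IPₙ) ≥ 2^(n/2)`. -/
theorem NN_IP_lower (n : ℕ) : (2 : ℝ) ^ ((n : ℝ) / 2) ≤ (NN (IP n) : ℝ) := by
  obtain ⟨P, N, hrep, hcard⟩ := NNIP.exists_isNNRep_card_eq_NN (IP n)
  have hsqrt : (2 : ℝ) ^ ((n : ℝ) / 2) = √(2 ^ n) := by
    rw [Real.sqrt_eq_rpow, ← Real.rpow_natCast, ← Real.rpow_mul (by norm_num)]
    ring_nf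
  rw [hsqrt, ← hcard]
  exact NNIP.sqrt_two_pow_le_card_of_isNNRep hrep
end
end

section
/- The nearest neighbor complexity of the n-variable parity function satisfies NN(x₁ ⊕ … ⊕ xₙ) ≥ n + 1. -/
open Finset

noncomputable section

/-! The anchors of a representation can be discarded one at a time, each time halving the
face of the cube on which the representation still has to be correct. Since parity changes
along every edge of the cube, an anchor `q` with maximal `d`-th coordinate never serves as the
nearest anchor of a point `a` with `a d = 0`: flipping `a d` to `1` would require an anchor of
the other label with strictly larger `d`-th coordinate. So dropping `q` keeps the representation
correct on the face `x_d = 0`, and `n` such steps leave a nonempty set of anchors. -/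

section Geometry

variable {E : Type*}

def NearerThan [MetricSpace E] (x : E) (P N : Finset E) : Prop :=
  ∃ b ∈ P, ∀ c ∈ N, dist x b < dist x c

theorem nearerThan_of_mem [MetricSpace E] {x : E} {P N : Finset E} (hP : x ∈ P) (hN : x ∉ N) :
    NearerThan x P N :=
  ⟨x, hP, fun c hc => by
    rw [dist_self]
    exact dist_pos.2 fun h => hN (h ▸ hc)⟩

theorem inner_sub_neg_of_dist_lt_of_dist_lt [NormedAddCommGroup E] [InnerProductSpace ℝ E]
    {x x' p q : E} (h : dist x q < dist x p) (h' : dist x' p < dist x' q) :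
    inner ℝ (x' - x) (q - p) < 0 := by
  simp only [dist_eq_norm] at h h'
  have hsq : ‖x - q‖ ^ 2 < ‖x - p‖ ^ 2 := by gcongr
  have hsq' : ‖x' - p‖ ^ 2 < ‖x' - q‖ ^ 2 := by gcongr
  simp only [norm_sub_sq_real, inner_sub_left, inner_sub_right] at hsq hsq' ⊢
  linarith

end Geometry

theorem toPoint_update_true_sub {n : ℕ} {a : Fin n → Bool} {d : Fin n} (had : a d = false) :
    toPoint (Function.update a d true) - toPoint a = EuclideanSpace.single d 1 := by
  ext i
  by_cases hi : i = d
  · subst hi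
    simp [toPoint, boolToR, had]
  · simp [toPoint, hi]

theorem exists_isNNRep {n : ℕ} (f : (Fin n → Bool) → Bool) : ∃ P N, IsNNRep f P N := by
  refine ⟨(univ.filter fun a => f a = true).image toPoint,
    (univ.filter fun a => f a = false).image toPoint, ?_,
    fun a => ⟨fun ha => ?_, fun ha => ?_⟩⟩
  · rw [disjoint_image toPoint_injective]
    exact disjoint_filter.2 fun a _ h => by simp [h]
  all_goals
    exact nearerThan_of_mem (by simp [toPoint_injective.mem_finset_image, ha])
      (by simp [toPoint_injective.mem_finset_image, ha])

theorem parity_update_true {n : ℕ} {a : Fin n → Bool} {d : Fin n} (had : a d = false) :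
    parity n (Function.update a d true) = !parity n a := by
  have hwt : wt (Function.update a d true) = wt a + 1 := by
    have hfilter : univ.filter (fun i => Function.update a d true i = true)
        = insert d (univ.filter fun i => a i = true) := by
      ext i
      by_cases hi : i = d <;> simp [hi]
    rw [wt, hfilter, card_insert_of_notMem (by simp [had]), wt]
  simp [parity, hwt, Nat.odd_add_one, -Nat.not_odd_iff_even]

section Faces

variable {n : ℕ}

def cubeFace (F : Finset (Fin n)) : Set (Fin n → Bool) := {a | ∀ i ∉ F, a i = false}

theorem cubeFace_nonempty (F : Finset (Fin n)) : (cubeFace F).Nonempty :=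
  ⟨fun _ => false, fun _ _ => rfl⟩

def NNRepOn (f : (Fin n → Bool) → Bool) (P N : Finset (EuclideanSpace ℝ (Fin n)))
    (S : Set (Fin n → Bool)) : Prop :=
  ∀ a ∈ S,
    (f a = true → NearerThan (toPoint a) P N) ∧ (f a = false → NearerThan (toPoint a) N P)

theorem IsNNRep.nnRepOn {f : (Fin n → Bool) → Bool} {P N : Finset (EuclideanSpace ℝ (Fin n))}
    (h : IsNNRep f P N) (S : Set (Fin n → Bool)) : NNRepOn f P N S :=
  fun a _ => h.2 a

theorem NNRepOn.union_nonempty {f : (Fin n → Bool) → Bool}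
    {P N : Finset (EuclideanSpace ℝ (Fin n))} {S : Set (Fin n → Bool)} (h : NNRepOn f P N S)
    (hS : S.Nonempty) : (P ∪ N).Nonempty := by
  obtain ⟨a, ha⟩ := hS
  cases hfa : f a
  · obtain ⟨b, hb, -⟩ := (h a ha).2 hfa
    exact ⟨b, mem_union_right _ hb⟩
  · obtain ⟨b, hb, -⟩ := (h a ha).1 hfa
    exact ⟨b, mem_union_left _ hb⟩

theorem NearerThan.erase_of_forall_le {a : Fin n → Bool} {d : Fin n} (had : a d = false)
    {P N : Finset (EuclideanSpace ℝ (Fin n))} {q : EuclideanSpace ℝ (Fin n)}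
    (hmax : ∀ r ∈ N, r d ≤ q d) (h : NearerThan (toPoint a) P N)
    (h' : NearerThan (toPoint (Function.update a d true)) N P) :
    NearerThan (toPoint a) (P.erase q) (N.erase q) := by
  obtain ⟨b, hbP, hb⟩ := h
  refine ⟨b, mem_erase.2 ⟨?_, hbP⟩, fun c hc => hb c (mem_of_mem_erase hc)⟩
  rintro rfl
  obtain ⟨w, hwN, hw⟩ := h'
  have hinner := inner_sub_neg_of_dist_lt_of_dist_lt (hb w hwN) (hw b hbP)
  rw [toPoint_update_true_sub had, EuclideanSpace.inner_single_left] at hinner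
  simp only [map_one, one_mul, PiLp.sub_apply] at hinner
  linarith [hmax w hwN]

theorem NNRepOn.erase_of_forall_le {f : (Fin n → Bool) → Bool}
    (hf : ∀ a d, a d = false → f (Function.update a d true) = !f a)
    {P N : Finset (EuclideanSpace ℝ (Fin n))} {F : Finset (Fin n)} {d : Fin n} (hd : d ∉ F)
    {q : EuclideanSpace ℝ (Fin n)} (hmax : ∀ r ∈ P ∪ N, r d ≤ q d)
    (h : NNRepOn f P N (cubeFace (insert d F))) :
    NNRepOn f (P.erase q) (N.erase q) (cubeFace F) := by
  intro a ha
  have had : a d = false := ha d hd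
  have ha_mem : a ∈ cubeFace (insert d F) := fun i hi =>
    ha i fun hiF => hi (mem_insert_of_mem hiF)
  have ha'_mem : Function.update a d true ∈ cubeFace (insert d F) := fun i hi => by
    rw [Function.update_of_ne (by rintro rfl; exact hi (mem_insert_self _ _))]
    exact ha_mem i hi
  have hfa' := hf a d had
  refine ⟨fun hfa => ?_, fun hfa => ?_⟩
  · exact ((h a ha_mem).1 hfa).erase_of_forall_le had (fun r hr => hmax r (mem_union_right _ hr))
      ((h _ ha'_mem).2 (by simp [hfa', hfa]))
  · exact ((h a ha_mem).2 hfa).erase_of_forall_le had (fun r hr => hmax r (mem_union_left _ hr))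
      ((h _ ha'_mem).1 (by simp [hfa', hfa]))

theorem NNRepOn.card_add_one_le {f : (Fin n → Bool) → Bool}
    (hf : ∀ a d, a d = false → f (Function.update a d true) = !f a) (F : Finset (Fin n)) :
    ∀ {P N : Finset (EuclideanSpace ℝ (Fin n))}, NNRepOn f P N (cubeFace F) →
      #F + 1 ≤ #(P ∪ N) := by
  induction F using Finset.induction_on with
  | empty =>
    intro P N h
    simpa using (h.union_nonempty (cubeFace_nonempty ∅)).card_pos
  | insert d F hd ih =>
    intro P N h
    obtain ⟨q, hq, hmax⟩ :=
      exists_max_image (P ∪ N) (fun r => r d) (h.union_nonempty (cubeFace_nonempty _))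
    have hrest := ih (h.erase_of_forall_le hf hd hmax)
    rw [← erase_union_distrib, card_erase_of_mem hq] at hrest
    have hpos := card_pos.2 ⟨q, hq⟩
    rw [card_insert_of_notMem hd]
    omega

end Faces

/-- The nearest neighbor complexity of the `n`-variable parity
function satisfies `NN(x₁ ⊕ ⋯ ⊕ xₙ) ≥ n + 1`. -/
theorem NN_parity_lower (n : ℕ) : n + 1 ≤ NN (parity n) := by
  obtain ⟨P₀, N₀, hrep₀⟩ := exists_isNNRep (parity n)
  obtain ⟨P, N, hrep, hcard⟩ :
      NN (parity n) ∈ {m | ∃ P N, IsNNRep (parity n) P N ∧ #(P ∪ N) = m} :=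
    Nat.sInf_mem ⟨_, P₀, N₀, hrep₀, rfl⟩
  rw [← hcard]
  simpa using
    (hrep.nnRepOn (cubeFace univ)).card_add_one_le (fun _ _ => parity_update_true) univ
end
end

section
/- Every sign-representation over {1,2} of the n-variable parity function x₁ ⊕ … ⊕ xₙ has at least n + 1 terms. -/
open Finset

noncomputable section

/-! Induction on `n`. If `p` sign-represents parity on `n + 1` variables, then `p(x, 1)` and
`p(x, 2)` (substituting for the last variable) have opposite signs, so for every `B > 0` the
polynomial `B p(x, 1) - p(x, 2)` sign-represents parity on the first `n` variables. Taking
`B = 2 ^ a`, where `a` is the exponent of `x̃ₙ₊₁` in one term of `p`, cancels that term, so the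
new representation has one term fewer. At `n = 0` one term is needed since parity takes the
value `0`. -/

def evalTwoPow {n m : ℕ} (c : Fin m → ℝ) (e : Fin m → Fin n → ℕ) (x : Fin n → Bool) : ℝ :=
  ∑ j, c j * ∏ i, (if x i then (2 : ℝ) else 1) ^ (e j i)

theorem isSignRep12_iff {n m : ℕ} {f : (Fin n → Bool) → Bool} {c : Fin m → ℝ}
    {e : Fin m → Fin n → ℕ} : IsSignRep12 f c e ↔ ∀ x, (f x = true ↔ 0 ≤ evalTwoPow c e x) :=
  Iff.rfl

theorem evalTwoPow_snoc {n m : ℕ} (c : Fin m → ℝ) (e : Fin m → Fin (n + 1) → ℕ)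
    (x : Fin n → Bool) (b : Bool) :
    evalTwoPow c e (Fin.snoc x b) =
      evalTwoPow (fun j => c j * (if b then (2 : ℝ) else 1) ^ e j (Fin.last n))
        (fun j i => e j i.castSucc) x := by
  refine Finset.sum_congr rfl fun j _ => ?_
  rw [Fin.prod_univ_castSucc]
  simp only [Fin.snoc_castSucc, Fin.snoc_last]
  ring

theorem evalTwoPow_sub_snoc {n m : ℕ} (c : Fin m → ℝ) (e : Fin m → Fin (n + 1) → ℕ) (B : ℝ)
    (x : Fin n → Bool) :
    evalTwoPow (fun j => c j * (B - 2 ^ e j (Fin.last n))) (fun j i => e j i.castSucc) x =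
      B * evalTwoPow c e (Fin.snoc x false) - evalTwoPow c e (Fin.snoc x true) := by
  rw [evalTwoPow_snoc, evalTwoPow_snoc]
  simp only [evalTwoPow, Finset.mul_sum, ← Finset.sum_sub_distrib]
  refine Finset.sum_congr rfl fun j _ => ?_
  simp only [Bool.false_eq_true, if_false, if_true, one_pow]
  ring

theorem evalTwoPow_succAbove_of_eq_zero {n m : ℕ} {c : Fin (m + 1) → ℝ}
    (e : Fin (m + 1) → Fin n → ℕ) {j₀ : Fin (m + 1)} (hj₀ : c j₀ = 0) (x : Fin n → Bool) :
    evalTwoPow (c ∘ j₀.succAbove) (e ∘ j₀.succAbove) x = evalTwoPow c e x := by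
  simp only [evalTwoPow, Fin.sum_univ_succAbove _ j₀, hj₀, zero_mul, zero_add, Function.comp]

namespace IsSignRep12

variable {n m : ℕ} {f : (Fin n → Bool) → Bool} {c : Fin m → ℝ} {e : Fin m → Fin n → ℕ}

theorem pos_of_eq_false (h : IsSignRep12 f c e) {x : Fin n → Bool} (hx : f x = false) :
    0 < m := by
  refine Nat.pos_of_ne_zero fun hm => ?_
  subst hm
  simpa [hx, evalTwoPow] using (isSignRep12_iff.mp h x).not

theorem of_eq_zero {c : Fin (m + 1) → ℝ} {e : Fin (m + 1) → Fin n → ℕ}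
    (h : IsSignRep12 f c e) {j₀ : Fin (m + 1)} (hj₀ : c j₀ = 0) :
    IsSignRep12 f (c ∘ j₀.succAbove) (e ∘ j₀.succAbove) := isSignRep12_iff.mpr fun x => by
  rw [isSignRep12_iff.mp h x, evalTwoPow_succAbove_of_eq_zero e hj₀]

/-- Since `p(x, 1)` and `p(x, 2)` have opposite signs, `B p(x, 1) - p(x, 2)` has the sign of
`p(x, 1)`. -/
theorem restrict_last {f : (Fin (n + 1) → Bool) → Bool} {e : Fin m → Fin (n + 1) → ℕ}
    (h : IsSignRep12 f c e) (hf : ∀ x, f (Fin.snoc x true) = !f (Fin.snoc x false))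
    {B : ℝ} (hB : 0 < B) :
    IsSignRep12 (fun x => f (Fin.snoc x false))
      (fun j => c j * (B - 2 ^ e j (Fin.last n))) (fun j i => e j i.castSucc) := by
  refine isSignRep12_iff.mpr fun x => ?_
  have h₀ := isSignRep12_iff.mp h (Fin.snoc x false)
  have h₁ := isSignRep12_iff.mp h (Fin.snoc x true)
  rw [hf] at h₁
  rw [evalTwoPow_sub_snoc]
  cases hx : f (Fin.snoc x false)
  · rw [hx] at h₀ h₁
    have hp₀ : evalTwoPow c e (Fin.snoc x false) < 0 := not_le.mp (mt h₀.mpr Bool.false_ne_true)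
    have hp₁ : 0 ≤ evalTwoPow c e (Fin.snoc x true) := h₁.mp rfl
    simp only [Bool.false_eq_true, false_iff, not_le]
    nlinarith
  · rw [hx] at h₀ h₁
    have hp₀ : 0 ≤ evalTwoPow c e (Fin.snoc x false) := h₀.mp rfl
    have hp₁ : evalTwoPow c e (Fin.snoc x true) < 0 := not_le.mp (mt h₁.mpr Bool.false_ne_true)
    simp only [true_iff]
    nlinarith

/-- `B = 2 ^ e 0 (last n)` kills the first term of `B p(·, 1) - p(·, 2)`. -/
theorem exists_restrict_last {f : (Fin (n + 1) → Bool) → Bool} {c : Fin (m + 1) → ℝ}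
    {e : Fin (m + 1) → Fin (n + 1) → ℕ} (h : IsSignRep12 f c e)
    (hf : ∀ x, f (Fin.snoc x true) = !f (Fin.snoc x false)) :
    ∃ (c' : Fin m → ℝ) (e' : Fin m → Fin n → ℕ),
      IsSignRep12 (fun x => f (Fin.snoc x false)) c' e' :=
  ⟨_, _, (h.restrict_last hf (B := 2 ^ e 0 (Fin.last n)) (by positivity)).of_eq_zero
    (j₀ := 0) (by simp)⟩

end IsSignRep12

theorem wt_snoc {n : ℕ} (x : Fin n → Bool) (b : Bool) :
    wt (Fin.snoc x b) = wt x + if b then 1 else 0 := by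
  simp only [wt, Finset.card_filter, Fin.sum_univ_castSucc, Fin.snoc_castSucc, Fin.snoc_last]

theorem parity_snoc_false {n : ℕ} (x : Fin n → Bool) :
    parity (n + 1) (Fin.snoc x false) = parity n x := by
  simp [parity, wt_snoc]

theorem parity_snoc_true {n : ℕ} (x : Fin n → Bool) :
    parity (n + 1) (Fin.snoc x true) = !parity (n + 1) (Fin.snoc x false) := by
  simp [parity, wt_snoc, Nat.odd_add_one, -Nat.not_odd_iff_even]

theorem parity_const_false (n : ℕ) : parity n (fun _ => false) = false := by
  simp [parity, wt]

/-- Every sign-representation over `{1, 2}` of the `n`-variable parity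
function has at least `n + 1` terms. -/
theorem signrep_parity_lower (n m : ℕ) (c : Fin m → ℝ) (e : Fin m → Fin n → ℕ)
    (h : IsSignRep12 (parity n) c e) :
    n + 1 ≤ m := by
  induction n generalizing m with
  | zero => exact h.pos_of_eq_false (parity_const_false 0)
  | succ n ih =>
    obtain ⟨m, rfl⟩ := Nat.exists_eq_add_one.mpr (h.pos_of_eq_false (parity_const_false _))
    obtain ⟨c', e', h'⟩ := h.exists_restrict_last parity_snoc_true
    simp only [parity_snoc_false] at h'
    exact Nat.succ_le_succ (ih m c' e' h')
end
end
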